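/- arXiv:2008.00722 — 5 statements merged into one kernel-verified Lean document; each statement's English description precedes it below -/
import Mathlib

section
/- Let n ≥ 1 and let x_1 ≥ x_2 ≥ ⋯ ≥ x_n ≥ 1 and a ≥ b > 0 be real numbers, and let k be an integer with n ≥ k ≥ n/2. Then for every permutation σ of {1,…,n} and every ℓ ∈ {n−k, k}, we have a·∏_{i=1}^{ℓ} x_{σ(i)} + b·∏_{i=ℓ+1}^{n} x_{σ(i)} ≤ a·∏_{i=1}^{k} x_i + b·∏_{i=k+1}^{n} x_i. -/
/-!
Write `A`, `B` for the two permuted products and `X`, `Y` for the sorted ones, so that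
`A * B = X * Y` is the product of all the `x i`. As `x` is antitone and `≥ 1`, a product of at
most `k` of the `x i` is at most `X = x 0 * ⋯ * x (k - 1)`; the condition `n - k ≤ ℓ ≤ k` makes
both `A` (`ℓ` factors) and `B` (`n - ℓ` factors) such products. From `A, B ≤ X` and
`A * B = X * Y` we get `Y ≤ A`, and then `A * (a X + b Y - a A - b B) = (X - A) (a A - b Y) ≥ 0`.
-/

open Finset

section HeadTail

variable {M : Type*} [CommMonoid M] {n : ℕ}

def headProd (x : Fin n → M) (ℓ : ℕ) : M :=
  ∏ i ∈ univ.filter (fun i : Fin n => (i : ℕ) < ℓ), x i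

def tailProd (x : Fin n → M) (ℓ : ℕ) : M :=
  ∏ i ∈ univ.filter (fun i : Fin n => ℓ ≤ (i : ℕ)), x i

theorem headProd_mul_tailProd (x : Fin n → M) (ℓ : ℕ) :
    headProd x ℓ * tailProd x ℓ = ∏ i, x i := by
  simpa only [headProd, tailProd, not_lt] using
    prod_filter_mul_prod_filter_not univ (fun i : Fin n => (i : ℕ) < ℓ) x

theorem headProd_succ (x : Fin n → M) {j : ℕ} (hj : j < n) :
    headProd x (j + 1) = x ⟨j, hj⟩ * headProd x j := by
  have hsplit : univ.filter (fun i : Fin n => (i : ℕ) < j + 1) =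
      insert ⟨j, hj⟩ (univ.filter (fun i : Fin n => (i : ℕ) < j)) := by
    ext i
    simp only [mem_filter, mem_univ, true_and, mem_insert, Fin.ext_iff]
    omega
  rw [headProd, hsplit, prod_insert (by simp), headProd]

end HeadTail

theorem card_filter_val_lt_le (n ℓ : ℕ) : #(univ.filter (fun i : Fin n => (i : ℕ) < ℓ)) ≤ ℓ := by
  simpa using card_le_card_of_injOn (t := range ℓ) Fin.val (by intro i; simp)
    Fin.val_injective.injOn

theorem card_filter_le_val_le (n ℓ : ℕ) :
    #(univ.filter (fun i : Fin n => ℓ ≤ (i : ℕ))) ≤ n - ℓ := by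
  simpa using card_le_card_of_injOn (t := Ico ℓ n) Fin.val (by intro i; simp)
    Fin.val_injective.injOn

section Ordered

variable {R : Type*} [CommSemiring R] [PartialOrder R] [IsOrderedRing R] {n : ℕ} {x : Fin n → R}

theorem prod_le_headProd_card (hx : ∀ i, 0 ≤ x i) (hanti : Antitone x) (S : Finset (Fin n)) :
    ∏ i ∈ S, x i ≤ headProd x #S := by
  induction S using Finset.induction_on_max with
  | empty => simp [headProd]
  | insert a s has ih =>
    have hsa : #s ≤ a := by
      simpa using card_le_card (t := Iio a) (fun i hi => mem_Iio.2 (has i hi))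
    have hs : #s < n := hsa.trans_lt a.isLt
    rw [prod_insert (fun ha => (has a ha).false), card_insert_of_notMem
      (fun ha => (has a ha).false), headProd_succ x hs]
    exact mul_le_mul (hanti hsa) ih (prod_nonneg fun i _ => hx i) (hx _)

theorem headProd_mono (hx : ∀ i, 1 ≤ x i) : Monotone (headProd x) := fun ℓ k hℓk =>
  prod_le_prod_of_subset_of_one_le (by
    intro i; simp only [mem_filter, mem_univ, true_and]; omega)
    (fun i _ => zero_le_one.trans (hx i)) fun i _ _ => hx i

theorem prod_le_headProd_of_card_le (hx : ∀ i, 1 ≤ x i) (hanti : Antitone x)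
    {S : Finset (Fin n)} {k : ℕ} (hS : #S ≤ k) : ∏ i ∈ S, x i ≤ headProd x k :=
  (prod_le_headProd_card (fun i => zero_le_one.trans (hx i)) hanti S).trans (headProd_mono hx hS)

theorem headProd_comp_perm_le (hx : ∀ i, 1 ≤ x i) (hanti : Antitone x) (σ : Equiv.Perm (Fin n))
    {ℓ k : ℕ} (hℓk : ℓ ≤ k) : headProd (x ∘ σ) ℓ ≤ headProd x k := by
  change ∏ i ∈ _, x (σ.toEmbedding i) ≤ _
  rw [← prod_map]
  exact prod_le_headProd_of_card_le hx hanti ((card_map _).trans_le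
    ((card_filter_val_lt_le n ℓ).trans hℓk))

theorem tailProd_comp_perm_le (hx : ∀ i, 1 ≤ x i) (hanti : Antitone x) (σ : Equiv.Perm (Fin n))
    {ℓ k : ℕ} (hℓk : n - ℓ ≤ k) : tailProd (x ∘ σ) ℓ ≤ headProd x k := by
  change ∏ i ∈ _, x (σ.toEmbedding i) ≤ _
  rw [← prod_map]
  exact prod_le_headProd_of_card_le hx hanti ((card_map _).trans_le
    ((card_filter_le_val_le n ℓ).trans hℓk))

end Ordered

theorem mul_add_mul_le_of_mul_eq {R : Type*} [CommRing R] [LinearOrder R] [IsStrictOrderedRing R]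
    {a b A B X Y : R} (hb : 0 ≤ b) (hba : b ≤ a) (hB : 0 < B) (hY : 0 < Y)
    (hAX : A ≤ X) (hBX : B ≤ X) (h : A * B = X * Y) : a * A + b * B ≤ a * X + b * Y := by
  have hYA : Y ≤ A := le_of_mul_le_mul_right (by nlinarith) hB
  have key : 0 ≤ (X - A) * (a * A - b * Y) :=
    mul_nonneg (sub_nonneg.2 hAX) (by nlinarith)
  refine le_of_mul_le_mul_left ?_ (hY.trans_le hYA)
  nlinarith

theorem mul_headProd_comp_perm_add_le {R : Type*} [CommRing R] [LinearOrder R]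
    [IsStrictOrderedRing R] {n : ℕ} {x : Fin n → R} (hx : ∀ i, 1 ≤ x i) (hanti : Antitone x)
    {a b : R} (hb : 0 ≤ b) (hba : b ≤ a) (σ : Equiv.Perm (Fin n)) {ℓ k : ℕ} (hℓk : ℓ ≤ k)
    (hnℓ : n - ℓ ≤ k) :
    a * headProd (x ∘ σ) ℓ + b * tailProd (x ∘ σ) ℓ ≤ a * headProd x k + b * tailProd x k := by
  refine mul_add_mul_le_of_mul_eq hb hba
    (zero_lt_one.trans_le (one_le_prod fun i _ => hx (σ i)))
    (zero_lt_one.trans_le (one_le_prod fun i _ => hx i))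
    (headProd_comp_perm_le hx hanti σ hℓk) (tailProd_comp_perm_le hx hanti σ hnℓ) ?_
  rw [headProd_mul_tailProd, headProd_mul_tailProd]
  exact Equiv.prod_comp σ x

theorem stmt0_general (n : ℕ) (x : Fin n → ℝ)
    (hdec : ∀ i j : Fin n, i ≤ j → x j ≤ x i) (hx : ∀ i, 1 ≤ x i)
    (a b : ℝ) (hb : 0 < b) (hba : b ≤ a)
    (k : ℕ) (hnk : n ≤ 2 * k)
    (σ : Equiv.Perm (Fin n)) (ℓ : ℕ) (hl : ℓ = n - k ∨ ℓ = k) :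
    a * ∏ i ∈ univ.filter (fun i : Fin n => (i : ℕ) < ℓ), x (σ i) +
      b * ∏ i ∈ univ.filter (fun i : Fin n => ℓ ≤ (i : ℕ)), x (σ i) ≤
    a * ∏ i ∈ univ.filter (fun i : Fin n => (i : ℕ) < k), x i +
      b * ∏ i ∈ univ.filter (fun i : Fin n => k ≤ (i : ℕ)), x i :=
  mul_headProd_comp_perm_add_le hx hdec hb.le hba σ (by omega) (by omega)

/-- Lemma `Lem:RearrIneq`, inequality part:
for `x_1 ≥ ⋯ ≥ x_n ≥ 1`, `a ≥ b > 0` and `n ≥ k ≥ n/2`, every rearranged split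
`ℓ ∈ {n-k, k}` gives a value at most `a·∏_{i≤k} x_i + b·∏_{i>k} x_i`. -/
theorem stmt0 (n : ℕ) (hn : 1 ≤ n) (x : Fin n → ℝ)
    (hdec : ∀ i j : Fin n, i ≤ j → x j ≤ x i) (hx : ∀ i, 1 ≤ x i)
    (a b : ℝ) (hb : 0 < b) (hba : b ≤ a)
    (k : ℕ) (hkn : k ≤ n) (hnk : n ≤ 2 * k)
    (σ : Equiv.Perm (Fin n)) (ℓ : ℕ) (hl : ℓ = n - k ∨ ℓ = k) :
    a * ∏ i ∈ univ.filter (fun i : Fin n => (i : ℕ) < ℓ), x (σ i) +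
      b * ∏ i ∈ univ.filter (fun i : Fin n => ℓ ≤ (i : ℕ)), x (σ i) ≤
    a * ∏ i ∈ univ.filter (fun i : Fin n => (i : ℕ) < k), x i +
      b * ∏ i ∈ univ.filter (fun i : Fin n => k ≤ (i : ℕ)), x i :=
  stmt0_general n x hdec hx a b hb hba k hnk σ ℓ hl
end

section
/- Let ρ be a real-valued isomorphism-invariant function on rooted trees satisfying conditions (I.1)–(I.3). If a tree T is ρ-exchange-extremal, then T is ρ_0-exchange-extremal, where ρ_0 assigns to each rooted tree its number of vertices. -/
/-!
Write `val u v` for the value of the branch at `u` away from its neighbour `v`. In a tree this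
value is `f` of the values of the subbranches, and the size of the branch is one plus the sum of
their sizes. Take two branches facing each other, at `u` (hanging from `v`) and at `t` (hanging
from `w`), with `val t w ≤ val u v`, and apply exchange-extremality to the pair `u, t`. Either `u`
has at least as many children as `t`, each of value at least that of every child of `t`; then, by
induction on the total size, each subbranch at `u` is at least as large as every subbranch at `t`,
and summing gives `|B(t, w)| ≤ |B(u, v)|`. Or all the inequalities go the other way; then the
strict monotonicity of `f` together with `val t w ≤ val u v` forces the numbers of children to
agree and all values to be equal, which is the first case again.
-/

open scoped Classical
open Finset

universe u

variable {V : Type u}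

/-- The neighbours of `v` in `G`, as a finset. -/
noncomputable def nbrs (G : SimpleGraph V) [Fintype V] (v : V) : Finset V :=
  Finset.univ.filter (fun u => G.Adj v u)

/-- The multiset of vertex degrees of `G`.  Two graphs have the same degree sequence
iff their degree multisets coincide. -/
noncomputable def degMultiset (G : SimpleGraph V) [Fintype V] : Multiset ℕ :=
  Finset.univ.val.map (fun v => (nbrs G v).card)

/-- For adjacent `u v` in a tree `G`, the vertex set of the complete branch of `G - uv`
containing `u` (rooted at `u`): the vertices strictly closer to `u` than to `v`. -/
noncomputable def branchFinset (G : SimpleGraph V) [Fintype V] (u v : V) : Finset V :=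
  insert u (Finset.univ.filter (fun x => G.dist x u < G.dist x v))

/-- The neighbours of `v` lying away from `w`, i.e. the roots of the complete branches
hanging from `v` that do not contain `w`. -/
noncomputable def awayChildren (G : SimpleGraph V) [Fintype V] (v w : V) : Finset V :=
  (nbrs G v).filter (fun u => G.dist v w < G.dist u w)

/-- The complete branch of `G` rooted at `u` away from `v`, as a rooted graph:
the induced subgraph on `branchFinset G u v`. -/
noncomputable def branchGraph (G : SimpleGraph V) [Fintype V] (u v : V) :
    SimpleGraph (↑(branchFinset G u v) : Set V) :=
  G.induce ↑(branchFinset G u v)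

/-- The root of the complete branch `branchGraph G u v`, namely `u`. -/
noncomputable def branchRoot (G : SimpleGraph V) [Fintype V] (u v : V) :
    (↑(branchFinset G u v) : Set V) :=
  ⟨u, Finset.mem_coe.mpr (Finset.mem_insert_self _ _)⟩

/-- `T` is `val`-exchange-extremal, where `val u v` is the value of the complete branch
rooted at `u` away from `v`: for every decomposition `T = [L_1,…,L_k] v H w [R_1,…,R_ℓ]`
(equivalently, for every pair of distinct vertices `v ≠ w`), either `k ≥ ℓ` and
`min val(L_i) ≥ max val(R_j)`, or `k ≤ ℓ` and `max val(L_i) ≤ min val(R_j)`. -/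
def ExchangeExtremal (G : SimpleGraph V) [Fintype V] (val : V → V → ℝ) : Prop :=
  ∀ v w : V, v ≠ w →
    ((awayChildren G w v).card ≤ (awayChildren G v w).card ∧
      ∀ u ∈ awayChildren G v w, ∀ t ∈ awayChildren G w v, val t w ≤ val u v) ∨
    ((awayChildren G v w).card ≤ (awayChildren G w v).card ∧
      ∀ u ∈ awayChildren G v w, ∀ t ∈ awayChildren G w v, val u v ≤ val t w)

lemma Finset.sum_le_sum_of_card_le_of_forall_le {ι : Type*} {A B : Finset ι} {F H : ι → ℕ}
    (hcard : #B ≤ #A) (hle : ∀ a ∈ A, ∀ b ∈ B, H b ≤ F a) : ∑ b ∈ B, H b ≤ ∑ a ∈ A, F a := by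
  rcases B.eq_empty_or_nonempty with rfl | hB
  · simp
  obtain ⟨a₀, ha₀, hmin⟩ :=
    A.exists_min_image F (card_pos.mp ((card_pos.mpr hB).trans_le hcard))
  calc ∑ b ∈ B, H b ≤ #B * F a₀ := by
        simpa using sum_le_card_nsmul B H (F a₀) fun b hb => hle a₀ ha₀ b hb
    _ ≤ #A * F a₀ := Nat.mul_le_mul_right _ hcard
    _ ≤ ∑ a ∈ A, F a := by simpa using card_nsmul_le_sum A F (F a₀) hmin

section MultisetMonotone

variable {α β : Type*} [LinearOrder α] [Preorder β] {f : Multiset α → β}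

lemma apply_add_le_apply_add_of_forall_le
    (hmono : ∀ (s : Multiset α) (y z : α), y < z → f (y ::ₘ s) < f (z ::ₘ s))
    (hadd : ∀ (s : Multiset α) (y : α), f s < f (y ::ₘ s)) (a : Multiset α) :
    ∀ {b c : Multiset α}, Multiset.card a ≤ Multiset.card b →
      (∀ x ∈ a, ∀ y ∈ b, x ≤ y) → f (a + c) ≤ f (b + c) := by
  induction a using Multiset.induction_on with
  | empty =>
    intro b c _ _
    induction b using Multiset.induction_on with
    | empty => exact le_rfl
    | cons y b ih =>
      calc f (0 + c) ≤ f (b + c) := ih (by simp) (by simp)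
        _ ≤ f (y ::ₘ b + c) := by rw [Multiset.cons_add]; exact (hadd _ _).le
  | cons x a ih =>
    intro b c hcard hle
    have hb : b ≠ 0 := by
      rintro rfl
      simp at hcard
    obtain ⟨y, hy⟩ := Multiset.exists_mem_of_ne_zero hb
    obtain ⟨b, rfl⟩ := Multiset.exists_cons_of_mem hy
    have hxy : x ≤ y := hle x (Multiset.mem_cons_self _ _) y hy
    calc f (x ::ₘ a + c) = f (a + x ::ₘ c) := by rw [Multiset.cons_add, Multiset.add_cons]
      _ ≤ f (b + x ::ₘ c) := ih (by simpa using hcard)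
          fun x' hx' y' hy' =>
            hle x' (Multiset.mem_cons_of_mem hx') y' (Multiset.mem_cons_of_mem hy')
      _ = f (x ::ₘ (b + c)) := by rw [Multiset.add_cons]
      _ ≤ f (y ::ₘ (b + c)) := by
          rcases hxy.lt_or_eq with hxy | rfl
          · exact (hmono _ _ _ hxy).le
          · exact le_rfl
      _ = f (y ::ₘ b + c) := by rw [Multiset.cons_add]

lemma apply_lt_apply_of_forall_le
    (hmono : ∀ (s : Multiset α) (y z : α), y < z → f (y ::ₘ s) < f (z ::ₘ s))
    (hadd : ∀ (s : Multiset α) (y : α), f s < f (y ::ₘ s)) {a b : Multiset α}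
    (hcard : Multiset.card a ≤ Multiset.card b) (hle : ∀ x ∈ a, ∀ y ∈ b, x ≤ y)
    (hstrict : Multiset.card a < Multiset.card b ∨ ∃ x ∈ a, ∃ y ∈ b, x < y) : f a < f b := by
  rcases hstrict with hlt | ⟨x, hx, y, hy, hxy⟩
  · obtain ⟨y, hy⟩ := Multiset.card_pos_iff_exists_mem.mp ((Nat.zero_le _).trans_lt hlt)
    obtain ⟨b, rfl⟩ := Multiset.exists_cons_of_mem hy
    calc f a = f (a + 0) := by rw [add_zero]
      _ ≤ f (b + 0) := apply_add_le_apply_add_of_forall_le hmono hadd a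
          (by simpa [Nat.lt_succ_iff] using hlt)
          fun x hx y hy => hle x hx y (Multiset.mem_cons_of_mem hy)
      _ < f (y ::ₘ b) := by rw [add_zero]; exact hadd _ _
  · obtain ⟨a, rfl⟩ := Multiset.exists_cons_of_mem hx
    obtain ⟨b, rfl⟩ := Multiset.exists_cons_of_mem hy
    calc f (x ::ₘ a) < f (y ::ₘ a) := hmono _ _ _ hxy
      _ = f (a + y ::ₘ 0) := by rw [Multiset.add_cons, add_zero]
      _ ≤ f (b + y ::ₘ 0) := apply_add_le_apply_add_of_forall_le hmono hadd a
          (by simpa using hcard) fun x' hx' y' hy' =>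
            hle x' (Multiset.mem_cons_of_mem hx') y' (Multiset.mem_cons_of_mem hy')
      _ = f (y ::ₘ b) := by rw [Multiset.add_cons, add_zero]

lemma card_le_and_forall_le_of_apply_le
    (hmono : ∀ (s : Multiset α) (y z : α), y < z → f (y ::ₘ s) < f (z ::ₘ s))
    (hadd : ∀ (s : Multiset α) (y : α), f s < f (y ::ₘ s)) {a b : Multiset α}
    (hcard : Multiset.card a ≤ Multiset.card b) (hle : ∀ x ∈ a, ∀ y ∈ b, x ≤ y)
    (hf : f b ≤ f a) : Multiset.card b ≤ Multiset.card a ∧ ∀ x ∈ a, ∀ y ∈ b, y ≤ x := by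
  refine ⟨?_, ?_⟩
  · by_contra! h
    exact (apply_lt_apply_of_forall_le hmono hadd hcard hle (.inl h)).not_ge hf
  · by_contra! h
    exact (apply_lt_apply_of_forall_le hmono hadd hcard hle (.inr h)).not_ge hf

end MultisetMonotone

namespace SimpleGraph

variable {X : Type*} {G : SimpleGraph X}

lemma Connected.exists_adj_dist_eq_add_one (hG : G.Connected) {a x : X} (hne : a ≠ x) :
    ∃ g, G.Adj a g ∧ G.dist x a = G.dist x g + 1 := by
  obtain ⟨p, -, hp⟩ := hG.exists_path_of_dist a x
  obtain ⟨g, hag, q, rfl⟩ := Walk.exists_eq_cons_of_ne hne p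
  refine ⟨g, hag, ?_⟩
  have hq := dist_le q
  have htri : G.dist a x ≤ G.dist a g + G.dist g x := hG.dist_triangle
  rw [Walk.length_cons] at hp
  rw [dist_eq_one_iff_adj.mpr hag] at htri
  rw [dist_comm (u := x), dist_comm (u := x)]
  omega

lemma IsTree.length_eq_dist (hG : G.IsTree) {a b : X} {p : G.Walk a b} (hp : p.IsPath) :
    p.length = G.dist a b := by
  obtain ⟨q, hq, hql⟩ := hG.connected.exists_path_of_dist a b
  rw [← hql, (hG.existsUnique_path a b).unique hp hq]

lemma IsTree.eq_penultimate_of_dist_eq_add_one (hG : G.IsTree) {x a g : X} {p : G.Walk x a}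
    (hp : p.IsPath) (hag : G.Adj a g) (h : G.dist x a = G.dist x g + 1) : g = p.penultimate := by
  obtain ⟨q, hq, hql⟩ := hG.connected.exists_path_of_dist x g
  have ha : a ∉ q.support := fun ha => by
    have := dist_le (q.takeUntil a ha)
    have := q.length_takeUntil_le_length ha
    omega
  exact hG.isAcyclic.eq_penultimate_of_adj_end hp hag
    (hG.isAcyclic.mem_support_of_ne_mem_support_of_adj_of_isPath hp hq hag ha)

lemma IsTree.eq_of_adj_of_dist_eq_add_one (hG : G.IsTree) {x a g₁ g₂ : X} (h₁ : G.Adj a g₁)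
    (h₂ : G.Adj a g₂) (e₁ : G.dist x a = G.dist x g₁ + 1) (e₂ : G.dist x a = G.dist x g₂ + 1) :
    g₁ = g₂ := by
  obtain ⟨p, hp, -⟩ := hG.connected.exists_path_of_dist x a
  rw [hG.eq_penultimate_of_dist_eq_add_one hp h₁ e₁,
    hG.eq_penultimate_of_dist_eq_add_one hp h₂ e₂]

lemma induce_connected_of_forall_exists_adj_dist_lt {s : Set X} {a : X} (ha : a ∈ s)
    (h : ∀ x ∈ s, x ≠ a → ∃ y ∈ s, G.Adj x y ∧ G.dist y a < G.dist x a) :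
    (G.induce s).Connected := by
  have reach : ∀ n, ∀ x : s, G.dist x a = n → (G.induce s).Reachable ⟨a, ha⟩ x := by
    intro n
    induction n using Nat.strong_induction_on with
    | _ n ih =>
      rintro ⟨x, hx⟩ rfl
      by_cases hxa : x = a
      · subst hxa
        rfl
      obtain ⟨y, hy, hxy, hlt⟩ := h x hx hxa
      exact (ih _ hlt ⟨y, hy⟩ rfl).trans (Adj.reachable (induce_adj.mpr hxy.symm))
  exact (connected_iff_exists_forall_reachable _).mpr ⟨⟨a, ha⟩, fun x => reach _ x rfl⟩

lemma IsTree.dist_induce (hG : G.IsTree) {s : Set X} (hs : (G.induce s).Connected) (x y : s) :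
    (G.induce s).dist x y = G.dist x y := by
  obtain ⟨p, hp, hpl⟩ := hs.exists_path_of_dist x y
  rw [← hpl, ← Walk.length_map (Embedding.induce s).toHom,
    hG.length_eq_dist (hp.map (Embedding.induce (G := G) s).injective)]
  rfl

end SimpleGraph

section Branches

variable {X : Type*} [Fintype X] {G : SimpleGraph X}

@[simp]
lemma mem_nbrs {a g : X} : g ∈ nbrs G a ↔ G.Adj a g := by
  simp [nbrs]

lemma mem_branchFinset {u v x : X} :
    x ∈ branchFinset G u v ↔ x = u ∨ G.dist x u < G.dist x v := by
  simp [branchFinset]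

lemma mem_branchFinset_iff (hG : G.IsTree) {a b x : X} (hab : G.Adj a b) :
    x ∈ branchFinset G a b ↔ G.dist x b = G.dist x a + 1 := by
  have := hG.dist_eq_dist_add_one_of_adj x hab
  rw [mem_branchFinset]
  constructor
  · rintro (rfl | h)
    · simp [SimpleGraph.dist_eq_one_iff_adj.mpr hab]
    · omega
  · intro h
    right
    omega

lemma mem_awayChildren_iff (hG : G.IsTree) {a x g : X} :
    g ∈ awayChildren G a x ↔ G.Adj a g ∧ G.dist x g = G.dist x a + 1 := by
  simp only [awayChildren, mem_filter, mem_nbrs, SimpleGraph.dist_comm (u := x)]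
  refine and_congr_right fun hag => ?_
  have := hG.dist_eq_dist_add_one_of_adj x hag
  rw [SimpleGraph.dist_comm (u := x), SimpleGraph.dist_comm (u := x)] at this
  omega

lemma awayChildren_eq_erase (hG : G.IsTree) {a b x : X} (hab : G.Adj a b)
    (hx : G.dist x a = G.dist x b + 1) : awayChildren G a x = (nbrs G a).erase b := by
  ext g
  rw [mem_awayChildren_iff hG, mem_erase, mem_nbrs]
  constructor
  · rintro ⟨hag, h⟩
    exact ⟨by rintro rfl; omega, hag⟩
  · rintro ⟨hgb, hag⟩
    refine ⟨hag, ?_⟩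
    rcases hG.dist_eq_dist_add_one_of_adj x hag with h | h
    · exact absurd (hG.eq_of_adj_of_dist_eq_add_one hag hab h hx) hgb
    · exact h

lemma branchFinset_eq_insert_biUnion (hG : G.IsTree) {a b : X} (hab : G.Adj a b) :
    branchFinset G a b = insert a (((nbrs G a).erase b).biUnion fun g => branchFinset G g a) := by
  ext x
  simp only [mem_insert, mem_biUnion, mem_erase, mem_nbrs]
  constructor
  · intro hx
    by_cases hxa : x = a
    · exact .inl hxa
    rw [mem_branchFinset_iff hG hab] at hx
    obtain ⟨g, hag, hg⟩ := hG.connected.exists_adj_dist_eq_add_one (Ne.symm hxa)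
    refine .inr ⟨g, ⟨?_, hag⟩, (mem_branchFinset_iff hG hag.symm).mpr hg⟩
    rintro rfl
    omega
  · rintro (rfl | ⟨g, ⟨hgb, hag⟩, hx⟩)
    · exact mem_insert_self _ _
    rw [mem_branchFinset_iff hG hag.symm] at hx
    rw [mem_branchFinset_iff hG hab]
    rcases hG.dist_eq_dist_add_one_of_adj x hab with h | h
    · exact absurd (hG.eq_of_adj_of_dist_eq_add_one hag hab hx h) hgb
    · exact h

lemma branchFinset_subset (hG : G.IsTree) {a b g : X} (hab : G.Adj a b)
    (hg : g ∈ (nbrs G a).erase b) : branchFinset G g a ⊆ branchFinset G a b := by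
  rw [branchFinset_eq_insert_biUnion hG hab]
  exact fun x hx => mem_insert_of_mem (mem_biUnion.mpr ⟨g, hg, hx⟩)

lemma card_branchFinset (hG : G.IsTree) {a b : X} (hab : G.Adj a b) :
    #(branchFinset G a b) = 1 + ∑ g ∈ (nbrs G a).erase b, #(branchFinset G g a) := by
  have hdisj : ((nbrs G a).erase b : Set X).PairwiseDisjoint fun g => branchFinset G g a := by
    intro g₁ hg₁ g₂ hg₂ hne
    simp only [coe_erase, Set.mem_sdiff, mem_coe, mem_nbrs] at hg₁ hg₂
    refine disjoint_left.mpr fun x hx₁ hx₂ => hne ?_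
    rw [mem_branchFinset_iff hG hg₁.1.symm] at hx₁
    rw [mem_branchFinset_iff hG hg₂.1.symm] at hx₂
    exact hG.eq_of_adj_of_dist_eq_add_one hg₁.1 hg₂.1 hx₁ hx₂
  have hroot : a ∉ ((nbrs G a).erase b).biUnion fun g => branchFinset G g a := by
    simp only [mem_biUnion, not_exists, not_and]
    intro g hg hag
    rw [mem_branchFinset_iff hG (mem_nbrs.mp (mem_of_mem_erase hg)).symm] at hag
    simp at hag
  rw [branchFinset_eq_insert_biUnion hG hab, card_insert_of_notMem hroot, card_biUnion hdisj,
    add_comm]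

lemma card_branchFinset_lt (hG : G.IsTree) {a b g : X} (hab : G.Adj a b)
    (hg : g ∈ (nbrs G a).erase b) : #(branchFinset G g a) < #(branchFinset G a b) := by
  rw [card_branchFinset hG hab]
  have := single_le_sum (f := fun g => #(branchFinset G g a)) (fun _ _ => Nat.zero_le _) hg
  omega

lemma branchGraph_isTree (hG : G.IsTree) {a b : X} (hab : G.Adj a b) :
    (branchGraph G a b).IsTree := by
  refine ⟨SimpleGraph.induce_connected_of_forall_exists_adj_dist_lt
    (mem_insert_self a _) fun x hx hxa => ?_, hG.isAcyclic.induce _⟩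
  obtain ⟨y, hxy, hy⟩ := hG.connected.exists_adj_dist_eq_add_one hxa
  refine ⟨y, ?_, hxy, ?_⟩
  · rw [mem_coe, mem_branchFinset_iff hG hab] at hx ⊢
    have htri : G.dist x b ≤ G.dist x y + G.dist y b := hG.connected.dist_triangle
    rw [SimpleGraph.dist_eq_one_iff_adj.mpr hxy] at htri
    rcases hG.dist_eq_dist_add_one_of_adj y hab with h | h <;>
      rw [SimpleGraph.dist_comm (u := a), SimpleGraph.dist_comm (u := a)] at hy <;> omega
  · rw [SimpleGraph.dist_comm (u := a), SimpleGraph.dist_comm (u := a)] at hy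
    omega

end Branches

section AwayChildren

variable {X : Type*} [Fintype X] {G : SimpleGraph X}

lemma ne_of_mem_awayChildren (hG : G.IsTree) {v w u t : X} (hvw : v ≠ w)
    (hu : u ∈ awayChildren G v w) (ht : t ∈ awayChildren G w v) : u ≠ t := by
  rintro rfl
  obtain ⟨-, hwu⟩ := (mem_awayChildren_iff hG).mp hu
  obtain ⟨hwt, -⟩ := (mem_awayChildren_iff hG).mp ht
  rw [SimpleGraph.dist_eq_one_iff_adj.mpr hwt] at hwu
  exact hvw (hG.connected.dist_eq_zero_iff.mp (by omega)).symm

/-- The key point is that the path from `t` to `u` passes through `v`. -/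
lemma awayChildren_eq_erase_of_mem (hG : G.IsTree) {v w u t : X} (hvw : v ≠ w)
    (hu : u ∈ awayChildren G v w) (ht : t ∈ awayChildren G w v) :
    awayChildren G u t = (nbrs G u).erase v := by
  obtain ⟨hvu, hwu⟩ := (mem_awayChildren_iff hG).mp hu
  obtain ⟨hwt, hvt⟩ := (mem_awayChildren_iff hG).mp ht
  refine awayChildren_eq_erase hG hvu.symm ?_
  rcases hG.dist_eq_dist_add_one_of_adj t hvu.symm with h | h
  · exact h
  obtain ⟨p, hvp, hwp⟩ := hG.connected.exists_adj_dist_eq_add_one hvw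
  have htri : G.dist t p ≤ G.dist t w + G.dist w p := hG.connected.dist_triangle
  rw [SimpleGraph.dist_comm (u := t) (v := w), SimpleGraph.dist_eq_one_iff_adj.mpr hwt] at htri
  rw [SimpleGraph.dist_comm (u := v), SimpleGraph.dist_comm (u := v)] at hvt
  have htp : G.dist t v = G.dist t p + 1 := by
    have := hG.dist_eq_dist_add_one_of_adj t hvp
    omega
  have hpu := hG.eq_of_adj_of_dist_eq_add_one hvp hvu htp h
  subst hpu
  omega

end AwayChildren

section BranchGraph

variable {X : Type u} [Fintype X] {G : SimpleGraph X}

lemma mem_branchFinset_branchGraph_iff (hG : G.IsTree) {a b g : X} (hab : G.Adj a b)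
    (hg : g ∈ (↑(branchFinset G a b) : Set X)) (x : (↑(branchFinset G a b) : Set X)) :
    x ∈ branchFinset (branchGraph G a b) ⟨g, hg⟩ (branchRoot G a b) ↔
      x.val ∈ branchFinset G g a := by
  have hdist := hG.dist_induce (branchGraph_isTree hG hab).connected
  simp only [mem_branchFinset, Subtype.ext_iff, branchGraph, hdist]
  rfl

lemma nbrs_branchRoot_map_val (hG : G.IsTree) {a b : X} (hab : G.Adj a b) :
    (nbrs (branchGraph G a b) (branchRoot G a b)).map (Function.Embedding.subtype _) =
      (nbrs G a).erase b := by
  ext g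
  simp only [mem_map, Function.Embedding.subtype_apply, mem_erase, mem_nbrs, Subtype.exists,
    exists_and_right, exists_eq_right]
  constructor
  · rintro ⟨hg, hag⟩
    refine ⟨?_, hag⟩
    rintro rfl
    simp [mem_branchFinset_iff hG hab] at hg
  · rintro ⟨hgb, hag⟩
    exact ⟨branchFinset_subset hG hab (mem_erase.mpr ⟨hgb, mem_nbrs.mpr hag⟩)
      (mem_insert_self g _), hag⟩

lemma rho_branchGraph_branchGraph (ρ : ∀ X : Type u, SimpleGraph X → X → ℝ)
    (hiso : ∀ (X₁ X₂ : Type u) [Fintype X₁] [Fintype X₂] (G₁ : SimpleGraph X₁)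
      (G₂ : SimpleGraph X₂), G₁.IsTree → ∀ (φ : G₁ ≃g G₂) (r : X₁),
        ρ X₂ G₂ (φ r) = ρ X₁ G₁ r)
    (hG : G.IsTree) {a b g : X} (hab : G.Adj a b) (hg : g ∈ (nbrs G a).erase b)
    (hg' : g ∈ (↑(branchFinset G a b) : Set X)) :
    ρ _ (branchGraph (branchGraph G a b) ⟨g, hg'⟩ (branchRoot G a b))
        (branchRoot (branchGraph G a b) ⟨g, hg'⟩ (branchRoot G a b)) =
      ρ _ (branchGraph G g a) (branchRoot G g a) := by
  have hag := mem_nbrs.mp (mem_of_mem_erase hg)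
  have hsub := branchFinset_subset hG hab hg
  have hmem := mem_branchFinset_branchGraph_iff hG hab hg'
  let φ : branchGraph G g a ≃g branchGraph (branchGraph G a b) ⟨g, hg'⟩ (branchRoot G a b) :=
    { toFun := fun x => ⟨⟨x, hsub x.2⟩, (hmem _).mpr x.2⟩
      invFun := fun y => ⟨y.1.1, (hmem _).mp y.2⟩
      left_inv := fun _ => rfl
      right_inv := fun _ => rfl
      map_rel_iff' := Iff.rfl }
  exact hiso _ _ _ _ (branchGraph_isTree hG hag.symm) φ (branchRoot G g a)

lemma rho_branchGraph_eq (ρ : ∀ X : Type u, SimpleGraph X → X → ℝ)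
    (hiso : ∀ (X₁ X₂ : Type u) [Fintype X₁] [Fintype X₂] (G₁ : SimpleGraph X₁)
      (G₂ : SimpleGraph X₂), G₁.IsTree → ∀ (φ : G₁ ≃g G₂) (r : X₁),
        ρ X₂ G₂ (φ r) = ρ X₁ G₁ r)
    (f : Multiset ℝ → ℝ)
    (hrec : ∀ (X : Type u) [Fintype X] (G : SimpleGraph X) (r : X), G.IsTree →
      ρ X G r = f ((nbrs G r).val.map (fun u =>
        ρ _ (branchGraph G u r) (branchRoot G u r))))
    (hG : G.IsTree) {a b : X} (hab : G.Adj a b) :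
    ρ _ (branchGraph G a b) (branchRoot G a b) =
      f (((nbrs G a).erase b).val.map fun g => ρ _ (branchGraph G g a) (branchRoot G g a)) := by
  rw [hrec _ _ _ (branchGraph_isTree hG hab), ← nbrs_branchRoot_map_val hG hab, map_val,
    Multiset.map_map]
  congr 1
  refine Multiset.map_congr rfl fun g hg => ?_
  exact rho_branchGraph_branchGraph ρ hiso hG hab
    (nbrs_branchRoot_map_val hG hab ▸ mem_map_of_mem _ hg) g.2

end BranchGraph

theorem card_branchFinset_le_of_le {X : Type*} [Fintype X] {T : SimpleGraph X} (hT : T.IsTree)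
    {f : Multiset ℝ → ℝ}
    (hmono : ∀ (s : Multiset ℝ) (y z : ℝ), y < z → f (y ::ₘ s) < f (z ::ₘ s))
    (hadd : ∀ (s : Multiset ℝ) (y : ℝ), f s < f (y ::ₘ s)) {val : X → X → ℝ}
    (hval : ∀ a b, T.Adj a b → val a b = f (((nbrs T a).erase b).val.map fun g => val g a))
    (hext : ExchangeExtremal T val) {v w u t : X} (hvw : v ≠ w) (hu : u ∈ awayChildren T v w)
    (ht : t ∈ awayChildren T w v) (hle : val t w ≤ val u v) :
    #(branchFinset T t w) ≤ #(branchFinset T u v) := by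
  have hvu := ((mem_awayChildren_iff hT).mp hu).1
  have hwt := ((mem_awayChildren_iff hT).mp ht).1
  have hut := ne_of_mem_awayChildren hT hvw hu ht
  have hU := awayChildren_eq_erase_of_mem hT hvw hu ht
  have hW := awayChildren_eq_erase_of_mem hT hvw.symm ht hu
  have of_children : #(awayChildren T t u) ≤ #(awayChildren T u t) →
      (∀ g ∈ awayChildren T u t, ∀ e ∈ awayChildren T t u, val e t ≤ val g u) →
      #(branchFinset T t w) ≤ #(branchFinset T u v) := by
    intro hcard hpair
    rw [card_branchFinset hT hwt.symm, card_branchFinset hT hvu.symm, ← hU, ← hW]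
    refine Nat.add_le_add_left (sum_le_sum_of_card_le_of_forall_le hcard fun g hg e he => ?_) 1
    -- the two size bounds are what `termination_by` needs
    have := card_branchFinset_lt hT hvu.symm (hU ▸ hg)
    have := card_branchFinset_lt hT hwt.symm (hW ▸ he)
    exact card_branchFinset_le_of_le hT hmono hadd hval hext hut hg he (hpair g hg e he)
  rcases hext u t hut with ⟨hcard, hpair⟩ | ⟨hcard, hpair⟩
  · exact of_children hcard hpair
  · rw [hval _ _ hwt.symm, hval _ _ hvu.symm, ← hU, ← hW] at hle
    obtain ⟨hcard', hpair'⟩ := card_le_and_forall_le_of_apply_le hmono hadd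
      (by simpa using hcard) (by simpa using hpair) hle
    exact of_children (by simpa using hcard') (by simpa using hpair')
termination_by #(branchFinset T u v) + #(branchFinset T t w)

theorem stmt4_general [Fintype V]
    (ρ : ∀ X : Type u, SimpleGraph X → X → ℝ)
    (hiso : ∀ (X₁ X₂ : Type u) [Fintype X₁] [Fintype X₂] (G₁ : SimpleGraph X₁)
      (G₂ : SimpleGraph X₂), G₁.IsTree → ∀ (φ : G₁ ≃g G₂) (r : X₁),
        ρ X₂ G₂ (φ r) = ρ X₁ G₁ r)
    (f : Multiset ℝ → ℝ)
    (hrec : ∀ (X : Type u) [Fintype X] (G : SimpleGraph X) (r : X), G.IsTree →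
      ρ X G r = f ((nbrs G r).val.map (fun u =>
        ρ _ (branchGraph G u r) (branchRoot G u r))))
    (hmono : ∀ (s : Multiset ℝ) (y z : ℝ), y < z → f (y ::ₘ s) < f (z ::ₘ s))
    (hadd : ∀ (s : Multiset ℝ) (y : ℝ), f s < f (y ::ₘ s))
    (T : SimpleGraph V) (hT : T.IsTree)
    (hext : ExchangeExtremal T (fun u v => ρ _ (branchGraph T u v) (branchRoot T u v))) :
    ExchangeExtremal T (fun u v => ((branchFinset T u v).card : ℝ)) := by
  have hval a b (hab : T.Adj a b) := rho_branchGraph_eq ρ hiso f hrec hT hab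
  intro v w hvw
  rcases hext v w hvw with ⟨hcard, hpair⟩ | ⟨hcard, hpair⟩
  · exact .inl ⟨hcard, fun u hu t ht => Nat.cast_le.mpr <|
      card_branchFinset_le_of_le hT hmono hadd hval hext hvw hu ht (hpair u hu t ht)⟩
  · exact .inr ⟨hcard, fun u hu t ht => Nat.cast_le.mpr <|
      card_branchFinset_le_of_le hT hmono hadd hval hext hvw.symm ht hu (hpair u hu t ht)⟩

/-- if `ρ` is an isomorphism-invariant rooted-tree invariant satisfying
(I.1)–(I.3) and the tree `T` is `ρ`-exchange-extremal, then `T` is `ρ₀`-exchange-extremal,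
where `ρ₀` is the number of vertices. -/
theorem stmt4 [Fintype V]
    (ρ : ∀ X : Type u, SimpleGraph X → X → ℝ)
    (hiso : ∀ (X₁ X₂ : Type u) [Fintype X₁] [Fintype X₂] (G₁ : SimpleGraph X₁)
      (G₂ : SimpleGraph X₂), G₁.IsTree → ∀ (φ : G₁ ≃g G₂) (r : X₁),
        ρ X₂ G₂ (φ r) = ρ X₁ G₁ r)
    (f : Multiset ℝ → ℝ)
    (hrec : ∀ (X : Type u) [Fintype X] (G : SimpleGraph X) (r : X), G.IsTree →
      ρ X G r = f ((nbrs G r).val.map (fun u =>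
        ρ _ (branchGraph G u r) (branchRoot G u r))))
    (hmono : ∀ (s : Multiset ℝ) (y z : ℝ), y < z → f (y ::ₘ s) < f (z ::ₘ s))
    (hadd : ∀ (s : Multiset ℝ) (y : ℝ), f s < f (y ::ₘ s))
    (hsingle : ∀ (X : Type u) [Fintype X] (G : SimpleGraph X) (r : X), G.IsTree →
      1 < Fintype.card X →
      ρ _ (⊥ : SimpleGraph PUnit.{u+1}) PUnit.unit < ρ X G r)
    (T : SimpleGraph V) (hT : T.IsTree)
    (hext : ExchangeExtremal T (fun u v => ρ _ (branchGraph T u v) (branchRoot T u v))) :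
    ExchangeExtremal T (fun u v => ((branchFinset T u v).card : ℝ)) :=
  stmt4_general ρ hiso f hrec hmono hadd T hT hext
end

section
/- Let H be a tree with two distinct leaves v and w, let A_1,…,A_k and B_1,…,B_ℓ be rooted trees, and let T = [A_1,…,A_k]vHw[B_1,…,B_ℓ]. Then η(T) = η(H−v−w) + ∑_{i=1}^k η(A_i) + ∑_{j=1}^ℓ η(B_j) + η(H−v, w)·∏_{j=1}^ℓ (1+η(B_j, r(B_j))) + η(H−w, v)·∏_{i=1}^k (1+η(A_i, r(A_i))) + η(H, v, w)·∏_{i=1}^k (1+η(A_i, r(A_i)))·∏_{j=1}^ℓ (1+η(B_j, r(B_j))). -/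
open scoped Classical
open Finset

universe u

variable {V : Type u}

/-- The number of subtrees of `G` (nonempty vertex sets inducing a connected subgraph)
that are contained in `P` and contain all vertices of `req`. -/
noncomputable def etaIn (G : SimpleGraph V) [Fintype V] (P req : Finset V) : ℕ :=
  Nat.card {s : Finset V // s.Nonempty ∧ s ⊆ P ∧ req ⊆ s ∧
    (G.induce (↑s : Set V)).Connected}

/-- The vertex set of the host tree `H` in the decomposition
`T = [A_1,…,A_k] v H w [B_1,…,B_ℓ]` determined by the pair `(v, w)`:
everything outside the branches hanging from `v` away from `w` and from `w` away from `v`. -/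
noncomputable def hostSet (G : SimpleGraph V) [Fintype V] (v w : V) : Finset V :=
  Finset.univ.filter (fun x =>
    (∀ u ∈ awayChildren G v w, x ∉ branchFinset G u v) ∧
    (∀ u ∈ awayChildren G w v, x ∉ branchFinset G u w))

/-!
In a tree a vertex set induces a connected subgraph iff it is nonempty and contains the unique
path between any two of its vertices. A branch `B` hanging at a vertex `c` meets the rest of the
tree only through `c`. Hence a subtree avoiding `c` either lies in `B` or misses it, which gives the
additive terms, while a subtree `s` through `c` splits into `s \ B`, again a subtree through `c`,
and `s ∩ B`, either empty or a subtree through the root of `B`, which gives the factor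
`1 + η(B, r(B))`. Sorting the subtrees of `T` by which of `v`, `w` they contain and removing the
branches at `v` and at `w` one at a time produces the six terms.
-/

namespace SimpleGraph.IsTree

variable {T : SimpleGraph V} (hT : T.IsTree)

noncomputable def path (a b : V) : T.Walk a b :=
  (hT.existsUnique_path a b).choose

lemma isPath_path (a b : V) : (hT.path a b).IsPath :=
  (hT.existsUnique_path a b).choose_spec.1

lemma eq_path {a b : V} {p : T.Walk a b} (hp : p.IsPath) : p = hT.path a b :=
  (hT.existsUnique_path a b).choose_spec.2 p hp

lemma mem_path_self {a x : V} : x ∈ (hT.path a a).support ↔ x = a := by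
  rw [← hT.eq_path Walk.IsPath.nil, Walk.support_nil, List.mem_singleton]

lemma mem_path_of_adj {a b x : V} (h : T.Adj a b) :
    x ∈ (hT.path a b).support ↔ x = a ∨ x = b := by
  rw [← hT.eq_path (p := .cons h .nil) (by simp [h.ne])]
  simp

lemma mem_path_comm {a b x : V} : x ∈ (hT.path b a).support ↔ x ∈ (hT.path a b).support := by
  rw [← hT.eq_path (hT.isPath_path a b).reverse, Walk.support_reverse, List.mem_reverse]

lemma path_eq_append {a b c : V} (h : c ∈ (hT.path a b).support) :
    hT.path a b = (hT.path a c).append (hT.path c b) := by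
  rw [← hT.eq_path ((hT.isPath_path a b).takeUntil h),
    ← hT.eq_path ((hT.isPath_path a b).dropUntil h), Walk.take_spec]

lemma mem_path_of_mem_path_left {a b c x : V} (h : c ∈ (hT.path a b).support)
    (hx : x ∈ (hT.path a c).support) : x ∈ (hT.path a b).support := by
  rw [hT.path_eq_append h, Walk.mem_support_append_iff]
  exact Or.inl hx

lemma mem_path_or_mem_path {a b x : V} (c : V) (hx : x ∈ (hT.path a b).support) :
    x ∈ (hT.path a c).support ∨ x ∈ (hT.path c b).support := by
  rw [← hT.eq_path ((hT.path a c).append (hT.path c b)).bypass_isPath] at hx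
  exact (Walk.mem_support_append_iff _ _).1 (Walk.support_bypass_subset_support _ hx)

lemma dist_eq_length_path (a b : V) : T.dist a b = (hT.path a b).length := by
  obtain ⟨p, hp, hl⟩ := hT.connected.exists_path_of_dist a b
  rw [← hl, hT.eq_path hp]

lemma dist_add_dist_of_mem_path {a b c : V} (h : c ∈ (hT.path a b).support) :
    T.dist a c + T.dist c b = T.dist a b := by
  rw [hT.dist_eq_length_path, hT.dist_eq_length_path, hT.dist_eq_length_path,
    hT.path_eq_append h, Walk.length_append]

lemma mem_path_iff_notMem_path {u v x : V} (h : T.Adj u v) :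
    u ∈ (hT.path x v).support ↔ v ∉ (hT.path x u).support := by
  refine ⟨fun hu hv => ?_, fun hv => ?_⟩
  · have hxv := hT.dist_add_dist_of_mem_path hu
    have hxu := hT.dist_add_dist_of_mem_path hv
    rw [dist_eq_one_iff_adj.2 h] at hxv
    rw [dist_eq_one_iff_adj.2 h.symm] at hxu
    omega
  · rw [← hT.eq_path ((hT.isPath_path x u).concat hv h), Walk.support_concat]
    simp

lemma dist_lt_dist_iff {u v x : V} (h : T.Adj u v) :
    T.dist x u < T.dist x v ↔ v ∉ (hT.path x u).support := by
  by_cases hv : v ∈ (hT.path x u).support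
  · have hxu := hT.dist_add_dist_of_mem_path hv
    rw [dist_eq_one_iff_adj.2 h.symm] at hxu
    simp only [hv, not_true_eq_false, iff_false]
    omega
  · have hxv := hT.dist_add_dist_of_mem_path ((hT.mem_path_iff_notMem_path h).2 hv)
    rw [dist_eq_one_iff_adj.2 h] at hxv
    simp only [hv, not_false_eq_true, iff_true]
    omega

def PathClosed (s : Finset V) : Prop :=
  ∀ a ∈ s, ∀ b ∈ s, ∀ x ∈ (hT.path a b).support, x ∈ s

lemma connected_induce_iff_pathClosed {s : Finset V} :
    (T.induce (s : Set V)).Connected ↔ s.Nonempty ∧ hT.PathClosed s := by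
  refine ⟨fun hs => ⟨?_, fun a ha b hb x hx => ?_⟩, fun ⟨⟨c, hc⟩, hs⟩ => ?_⟩
  · obtain ⟨⟨x, hx⟩⟩ := hs.nonempty
    exact ⟨x, hx⟩
  · obtain ⟨p⟩ := hs.preconnected ⟨a, ha⟩ ⟨b, hb⟩
    let q : T.Walk a b := p.map (Embedding.induce (s : Set V)).toHom
    rw [← hT.eq_path q.bypass_isPath] at hx
    obtain ⟨y, -, rfl⟩ :=
      List.mem_map.1 (Walk.support_map _ _ ▸ q.support_bypass_subset_support hx)
    exact y.2
  · refine induce_connected_of_patches c hc fun {b} hb =>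
      ⟨{x | x ∈ (hT.path c b).support}, fun x hx => hs c hc b hb x hx,
        (hT.path c b).start_mem_support, (hT.path c b).end_mem_support, ?_⟩
    exact (hT.path c b).connected_induce_support.preconnected _ _

lemma PathClosed.inter {hT : T.IsTree} {s t : Finset V} (hs : hT.PathClosed s)
    (ht : hT.PathClosed t) : hT.PathClosed (s ∩ t) := by
  intro a ha b hb x hx
  rw [mem_inter] at ha hb ⊢
  exact ⟨hs a ha.1 b hb.1 x hx, ht a ha.2 b hb.2 x hx⟩

end SimpleGraph.IsTree

section Branches

variable [Fintype V] {T : SimpleGraph V} {u v w x : V}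

lemma left_mem_branchFinset (G : SimpleGraph V) (u v : V) : u ∈ branchFinset G u v :=
  mem_insert_self _ _

lemma filter_sdiff_branchFinset {A : Finset V} (P : Finset V) (c u : V) :
    (P.filter fun x => ∀ u' ∈ A, x ∉ branchFinset T u' c) \ branchFinset T u c =
      P.filter fun x => ∀ u' ∈ insert u A, x ∉ branchFinset T u' c := by
  ext x
  simp only [mem_sdiff, mem_filter, forall_mem_insert]
  tauto

lemma mem_hostSet : x ∈ hostSet T v w ↔
    (∀ u ∈ awayChildren T v w, x ∉ branchFinset T u v) ∧
      ∀ t ∈ awayChildren T w v, x ∉ branchFinset T t w := by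
  simp [hostSet]

lemma hostSet_comm : hostSet T v w = hostSet T w v := by
  ext x
  rw [mem_hostSet, mem_hostSet]
  exact and_comm

namespace SimpleGraph.IsTree

lemma mem_branchFinset (hT : T.IsTree) (h : T.Adj u v) :
    x ∈ branchFinset T u v ↔ v ∉ (hT.path x u).support := by
  rw [branchFinset, mem_insert, mem_filter, hT.dist_lt_dist_iff h]
  refine ⟨?_, fun hv => Or.inr ⟨mem_univ _, hv⟩⟩
  rintro (rfl | ⟨-, hv⟩)
  · rw [hT.mem_path_self]
    exact h.ne'
  · exact hv

lemma right_notMem_branchFinset (hT : T.IsTree) (h : T.Adj u v) : v ∉ branchFinset T u v := by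
  rw [hT.mem_branchFinset h, not_not]
  exact Walk.start_mem_support _

lemma notMem_branchFinset_iff (hT : T.IsTree) (h : T.Adj u v) :
    x ∉ branchFinset T u v ↔ x ∈ branchFinset T v u := by
  rw [hT.mem_branchFinset h, hT.mem_branchFinset h.symm, not_not,
    hT.mem_path_iff_notMem_path h.symm]

lemma sdiff_branchFinset (hT : T.IsTree) (h : T.Adj u v) (s : Finset V) :
    s \ branchFinset T u v = s ∩ branchFinset T v u := by
  ext x
  rw [mem_sdiff, mem_inter, hT.notMem_branchFinset_iff h]

lemma mem_path_of_mem_branchFinset (hT : T.IsTree) (h : T.Adj u v)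
    (hx : x ∈ branchFinset T u v) : u ∈ (hT.path x v).support :=
  (hT.mem_path_iff_notMem_path h).2 ((hT.mem_branchFinset h).1 hx)

lemma mem_path_of_mem_branchFinset_of_notMem (hT : T.IsTree) {y : V} (h : T.Adj u v)
    (hx : x ∈ branchFinset T u v) (hy : y ∉ branchFinset T u v) :
    v ∈ (hT.path x y).support := by
  rw [hT.mem_branchFinset h] at hx hy
  rw [not_not] at hy
  rcases hT.mem_path_or_mem_path x hy with hyx | hxu
  · exact hT.mem_path_comm.1 hyx
  · exact absurd hxu hx

lemma pathClosed_branchFinset (hT : T.IsTree) (h : T.Adj u v) :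
    hT.PathClosed (branchFinset T u v) := by
  intro a ha b hb x hx
  by_contra hxB
  have hvab : v ∈ (hT.path a b).support :=
    hT.mem_path_of_mem_path_left hx (hT.mem_path_of_mem_branchFinset_of_notMem h ha hxB)
  rw [hT.mem_branchFinset h] at ha hb
  rcases hT.mem_path_or_mem_path u hvab with hvau | hvub
  · exact ha hvau
  · exact hb (hT.mem_path_comm.1 hvub)

lemma subset_branchFinset_of_pathClosed (hT : T.IsTree) {s : Finset V} (h : T.Adj u v)
    (hs : hT.PathClosed s) (hv : v ∉ s) (hx : x ∈ s) (hxB : x ∈ branchFinset T u v) :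
    s ⊆ branchFinset T u v :=
  fun y hy => by_contra fun hyB =>
    hv (hs x hx y hy v (hT.mem_path_of_mem_branchFinset_of_notMem h hxB hyB))

lemma disjoint_branchFinset (hT : T.IsTree) {u' : V} (hu : T.Adj u v) (hu' : T.Adj u' v)
    (hne : u ≠ u') : Disjoint (branchFinset T u v) (branchFinset T u' v) := by
  have hu_notMem : u ∉ branchFinset T u' v := by
    rw [hT.notMem_branchFinset_iff hu', hT.mem_branchFinset hu'.symm, hT.mem_path_of_adj hu]
    rintro (rfl | rfl)
    exacts [hne rfl, hu'.ne rfl]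
  exact Finset.disjoint_left.2 fun x hx hx' =>
    (hT.mem_branchFinset hu).1 hx (hT.mem_path_of_mem_branchFinset_of_notMem hu' hx' hu_notMem)

lemma branchFinset_subset_filter (hT : T.IsTree) {A P : Finset V} {c : V}
    (hA : ∀ u' ∈ insert u A, T.Adj u' c) (hu : u ∉ A) (hBP : branchFinset T u c ⊆ P) :
    branchFinset T u c ⊆ P.filter fun x => ∀ u' ∈ A, x ∉ branchFinset T u' c := by
  intro x hx
  refine mem_filter.2 ⟨hBP hx, fun u' hu' hx' => ?_⟩
  have hne : u ≠ u' := fun he => hu (he ▸ hu')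
  exact Finset.disjoint_left.1 (hT.disjoint_branchFinset (hA u (mem_insert_self u A))
    (hA u' (mem_insert_of_mem hu')) hne) hx hx'

lemma mem_awayChildren (hT : T.IsTree) :
    u ∈ awayChildren T v w ↔ T.Adj v u ∧ w ∉ branchFinset T u v := by
  simp only [awayChildren, nbrs, mem_filter, mem_univ, true_and]
  refine and_congr_right fun h => ?_
  rw [dist_comm, dist_comm (u := u), hT.dist_lt_dist_iff h, hT.mem_branchFinset h.symm,
    hT.mem_path_iff_notMem_path h.symm]

lemma disjoint_branchFinset_of_mem_awayChildren (hT : T.IsTree) {t : V} (hvw : v ≠ w)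
    (hu : u ∈ awayChildren T v w) (ht : t ∈ awayChildren T w v) :
    Disjoint (branchFinset T u v) (branchFinset T t w) := by
  obtain ⟨hvu, hwu⟩ := hT.mem_awayChildren.1 hu
  obtain ⟨hwt, hvt⟩ := hT.mem_awayChildren.1 ht
  refine Finset.disjoint_left.2 fun x hxu hxt => ?_
  have hxw := hT.dist_add_dist_of_mem_path
    (hT.mem_path_of_mem_branchFinset_of_notMem hvu.symm hxu hwu)
  have hxv := hT.dist_add_dist_of_mem_path
    (hT.mem_path_of_mem_branchFinset_of_notMem hwt.symm hxt hvt)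
  have hpos := hT.connected.pos_dist_of_ne hvw
  rw [dist_comm (u := w)] at hxv
  omega

lemma mem_branchFinset_of_mem_awayChildren (hT : T.IsTree) (hvw : v ≠ w) {t : V}
    (ht : t ∈ awayChildren T w v) (hx : x ∈ branchFinset T t w) :
    x ≠ v ∧ x ≠ w ∧ ∀ u ∈ awayChildren T v w, x ∉ branchFinset T u v := by
  obtain ⟨hwt, hvt⟩ := hT.mem_awayChildren.1 ht
  refine ⟨fun hxv => hvt (hxv ▸ hx),
    fun hxw => hT.right_notMem_branchFinset hwt.symm (hxw ▸ hx), fun u hu hxu => ?_⟩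
  exact Finset.disjoint_left.1 (hT.disjoint_branchFinset_of_mem_awayChildren hvw hu ht) hxu hx

end SimpleGraph.IsTree

end Branches

section Subtrees

variable [Fintype V]

noncomputable def subtreesIn (G : SimpleGraph V) (P req : Finset V) : Finset (Finset V) :=
  univ.filter fun s => s.Nonempty ∧ s ⊆ P ∧ req ⊆ s ∧ (G.induce (s : Set V)).Connected

lemma mem_subtreesIn {G : SimpleGraph V} {P req s : Finset V} :
    s ∈ subtreesIn G P req ↔
      s.Nonempty ∧ s ⊆ P ∧ req ⊆ s ∧ (G.induce (s : Set V)).Connected := by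
  simp [subtreesIn]

lemma etaIn_eq_card_subtreesIn (G : SimpleGraph V) (P req : Finset V) :
    etaIn G P req = (subtreesIn G P req).card := by
  rw [etaIn, Nat.card_eq_fintype_card, Fintype.card_subtype, subtreesIn]

lemma etaIn_eq_zero_of_not_subset (G : SimpleGraph V) {P req : Finset V} (h : ¬ req ⊆ P) :
    etaIn G P req = 0 := by
  rw [etaIn_eq_card_subtreesIn, card_eq_zero, eq_empty_iff_forall_notMem]
  exact fun s hs => h ((mem_subtreesIn.1 hs).2.2.1.trans (mem_subtreesIn.1 hs).2.1)

lemma etaIn_eq_etaIn_erase_add_etaIn_insert (G : SimpleGraph V) (P req : Finset V) (x : V) :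
    etaIn G P req = etaIn G (P.erase x) req + etaIn G P (insert x req) := by
  simp only [etaIn_eq_card_subtreesIn]
  rw [← card_filter_add_card_filter_not (p := fun s => x ∉ s)]
  congr 2 <;> ext s <;>
    simp only [mem_filter, mem_subtreesIn, subset_erase, insert_subset_iff] <;> tauto

lemma union_mem_subtreesIn {G : SimpleGraph V} {P B req s₁ s₂ : Finset V} {c u : V}
    (h : G.Adj u c) (hBP : B ⊆ P) (hs₁ : s₁ ∈ subtreesIn G (P \ B) (insert c req))
    (hs₂ : s₂ = ∅ ∨ s₂ ∈ subtreesIn G B {u}) :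
    s₁ ∪ s₂ ∈ subtreesIn G P (insert c req) := by
  obtain ⟨hne, hsub, hreq₁, hconn₁⟩ := mem_subtreesIn.1 hs₁
  rcases hs₂ with rfl | hs₂
  · rw [union_empty]
    exact mem_subtreesIn.2 ⟨hne, hsub.trans sdiff_subset, hreq₁, hconn₁⟩
  obtain ⟨-, hsB, hu, hconn₂⟩ := mem_subtreesIn.1 hs₂
  refine mem_subtreesIn.2 ⟨hne.mono subset_union_left,
    union_subset (hsub.trans sdiff_subset) (hsB.trans hBP), hreq₁.trans subset_union_left, ?_⟩
  rw [coe_union]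
  exact SimpleGraph.connected_induce_union hconn₁.preconnected hconn₂.preconnected
    (hreq₁ (mem_insert_self c req)) (singleton_subset_iff.1 hu) h.symm

end Subtrees

namespace SimpleGraph.IsTree

variable [Fintype V] {T : SimpleGraph V} {P req : Finset V} {c u v w : V}

lemma mem_subtreesIn_iff_pathClosed (hT : T.IsTree) {s : Finset V} :
    s ∈ subtreesIn T P req ↔ s.Nonempty ∧ hT.PathClosed s ∧ s ⊆ P ∧ req ⊆ s := by
  rw [mem_subtreesIn, hT.connected_induce_iff_pathClosed]
  tauto

lemma etaIn_eq_etaIn_sdiff_add (hT : T.IsTree) (h : T.Adj u c) (hc : c ∉ P)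
    (hBP : branchFinset T u c ⊆ P) :
    etaIn T P req = etaIn T (P \ branchFinset T u c) req + etaIn T (branchFinset T u c) req := by
  simp only [etaIn_eq_card_subtreesIn]
  rw [← card_union_of_disjoint]
  · congr 1
    ext s
    simp only [mem_union, hT.mem_subtreesIn_iff_pathClosed]
    constructor
    · rintro ⟨hne, hs, hsP, hreq⟩
      by_cases hmeet : ∃ x ∈ s, x ∈ branchFinset T u c
      · obtain ⟨x, hx, hxB⟩ := hmeet
        exact Or.inr ⟨hne, hs,
          hT.subset_branchFinset_of_pathClosed h hs (fun hcs => hc (hsP hcs)) hx hxB, hreq⟩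
      · push Not at hmeet
        exact Or.inl ⟨hne, hs, fun x hx => mem_sdiff.2 ⟨hsP hx, hmeet x hx⟩, hreq⟩
    · rintro (⟨hne, hs, hsP, hreq⟩ | ⟨hne, hs, hsB, hreq⟩)
      exacts [⟨hne, hs, hsP.trans sdiff_subset, hreq⟩, ⟨hne, hs, hsB.trans hBP, hreq⟩]
  · refine Finset.disjoint_left.2 fun s hs hs' => ?_
    obtain ⟨x, hx⟩ := (mem_subtreesIn.1 hs).1
    exact (mem_sdiff.1 ((mem_subtreesIn.1 hs).2.1 hx)).2 ((mem_subtreesIn.1 hs').2.1 hx)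

lemma sdiff_branchFinset_mem_subtreesIn (hT : T.IsTree) {s : Finset V} (h : T.Adj u c)
    (hreq : Disjoint req (branchFinset T u c)) (hs : s ∈ subtreesIn T P (insert c req)) :
    s \ branchFinset T u c ∈ subtreesIn T (P \ branchFinset T u c) (insert c req) := by
  obtain ⟨-, hs, hsP, hreqs⟩ := hT.mem_subtreesIn_iff_pathClosed.1 hs
  rw [insert_subset_iff] at hreqs
  have hc : c ∈ s \ branchFinset T u c :=
    mem_sdiff.2 ⟨hreqs.1, hT.right_notMem_branchFinset h⟩
  refine hT.mem_subtreesIn_iff_pathClosed.2 ⟨⟨c, hc⟩, ?_, sdiff_subset_sdiff hsP subset_rfl,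
    insert_subset_iff.2 ⟨hc, fun x hx =>
      mem_sdiff.2 ⟨hreqs.2 hx, Finset.disjoint_left.1 hreq hx⟩⟩⟩
  rw [hT.sdiff_branchFinset h]
  exact hs.inter (hT.pathClosed_branchFinset h.symm)

lemma inter_branchFinset_mem_subtreesIn (hT : T.IsTree) {s : Finset V} (h : T.Adj u c)
    (hs : s ∈ subtreesIn T P (insert c req)) (hne : (s ∩ branchFinset T u c).Nonempty) :
    s ∩ branchFinset T u c ∈ subtreesIn T (branchFinset T u c) {u} := by
  obtain ⟨-, hs, -, hreqs⟩ := hT.mem_subtreesIn_iff_pathClosed.1 hs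
  obtain ⟨x, hx⟩ := hne
  rw [mem_inter] at hx
  have hu : u ∈ s := hs x hx.1 c (insert_subset_iff.1 hreqs).1 u
    (hT.mem_path_of_mem_branchFinset h hx.2)
  exact hT.mem_subtreesIn_iff_pathClosed.2 ⟨⟨x, mem_inter.2 hx⟩,
    hs.inter (hT.pathClosed_branchFinset h), inter_subset_right,
    singleton_subset_iff.2 (mem_inter.2 ⟨hu, left_mem_branchFinset T u c⟩)⟩

lemma etaIn_insert_eq_mul (hT : T.IsTree) (h : T.Adj u c) (hBP : branchFinset T u c ⊆ P)
    (hreq : Disjoint req (branchFinset T u c)) :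
    etaIn T P (insert c req) =
      etaIn T (P \ branchFinset T u c) (insert c req) * (1 + etaIn T (branchFinset T u c) {u}) := by
  set B := branchFinset T u c
  have hempty : ∅ ∉ subtreesIn T B {u} := fun he => by
    simpa using (mem_subtreesIn.1 he).1
  simp only [etaIn_eq_card_subtreesIn]
  rw [add_comm 1, ← card_insert_of_notMem hempty, ← card_product]
  refine card_nbij' (fun s => (s \ B, s ∩ B)) (fun p => p.1 ∪ p.2) ?_ ?_ ?_ ?_
  · intro s hs
    simp only [coe_product, Set.mem_prod, mem_coe, mem_insert]
    refine ⟨hT.sdiff_branchFinset_mem_subtreesIn h hreq hs, ?_⟩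
    rcases (s ∩ B).eq_empty_or_nonempty with hsB | hsB
    exacts [Or.inl hsB, Or.inr (hT.inter_branchFinset_mem_subtreesIn h hs hsB)]
  · rintro ⟨s₁, s₂⟩ hp
    simp only [coe_product, Set.mem_prod, mem_coe, mem_insert] at hp
    exact union_mem_subtreesIn h hBP hp.1 hp.2
  · intro s _
    exact sdiff_union_inter s B
  · rintro ⟨s₁, s₂⟩ hp
    simp only [coe_product, Set.mem_prod, mem_coe, mem_insert, mem_subtreesIn] at hp
    obtain ⟨⟨-, hsub, -⟩, hs₂⟩ := hp
    have hs₁B : ∀ x ∈ s₁, x ∉ B := fun x hx => (mem_sdiff.1 (hsub hx)).2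
    have hs₂B : s₂ ⊆ B := by
      rcases hs₂ with rfl | ⟨-, hsB, -⟩
      exacts [empty_subset _, hsB]
    simp only [Prod.mk.injEq]
    constructor <;> ext x <;> simp only [mem_sdiff, mem_inter, mem_union] <;> grind

lemma etaIn_eq_etaIn_filter_add_sum (hT : T.IsTree) {A : Finset V} (hA : ∀ u ∈ A, T.Adj u c)
    (hc : c ∉ P) (hAP : ∀ u ∈ A, branchFinset T u c ⊆ P) :
    etaIn T P req = etaIn T (P.filter fun x => ∀ u ∈ A, x ∉ branchFinset T u c) req +
      ∑ u ∈ A, etaIn T (branchFinset T u c) req := by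
  induction A using Finset.induction_on with
  | empty => simp
  | insert a A ha ih =>
    rw [ih (fun u hu => hA u (mem_insert_of_mem hu)) (fun u hu => hAP u (mem_insert_of_mem hu)),
      hT.etaIn_eq_etaIn_sdiff_add (hA a (mem_insert_self a A)) (fun hcP => hc (mem_filter.1 hcP).1)
        (hT.branchFinset_subset_filter hA ha (hAP a (mem_insert_self a A))),
      filter_sdiff_branchFinset, sum_insert ha]
    ring

lemma etaIn_insert_eq_mul_prod (hT : T.IsTree) {A : Finset V} (hA : ∀ u ∈ A, T.Adj u c)
    (hAP : ∀ u ∈ A, branchFinset T u c ⊆ P)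
    (hreq : ∀ u ∈ A, Disjoint req (branchFinset T u c)) :
    etaIn T P (insert c req) =
      etaIn T (P.filter fun x => ∀ u ∈ A, x ∉ branchFinset T u c) (insert c req) *
        ∏ u ∈ A, (1 + etaIn T (branchFinset T u c) {u}) := by
  induction A using Finset.induction_on with
  | empty => simp
  | insert a A ha ih =>
    rw [ih (fun u hu => hA u (mem_insert_of_mem hu)) (fun u hu => hAP u (mem_insert_of_mem hu))
        (fun u hu => hreq u (mem_insert_of_mem hu)),
      hT.etaIn_insert_eq_mul (hA a (mem_insert_self a A))
        (hT.branchFinset_subset_filter hA ha (hAP a (mem_insert_self a A)))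
        (hreq a (mem_insert_self a A)),
      filter_sdiff_branchFinset, prod_insert ha]
    ring

lemma etaIn_erase_erase_eq (hT : T.IsTree) (hvw : v ≠ w) :
    etaIn T ((univ.erase v).erase w) ∅ =
      etaIn T (((hostSet T v w).erase v).erase w) ∅
      + ∑ u ∈ awayChildren T v w, etaIn T (branchFinset T u v) ∅
      + ∑ t ∈ awayChildren T w v, etaIn T (branchFinset T t w) ∅ := by
  have hhost : (((univ.erase v).erase w).filter fun x =>
      ∀ u ∈ awayChildren T v w, x ∉ branchFinset T u v).filter
        (fun x => ∀ t ∈ awayChildren T w v, x ∉ branchFinset T t w) =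
      ((hostSet T v w).erase v).erase w := by
    ext x
    simp only [mem_filter, mem_erase, mem_univ, mem_hostSet]
    tauto
  rw [hT.etaIn_eq_etaIn_filter_add_sum (c := v) (A := awayChildren T v w)
      (fun u hu => (hT.mem_awayChildren.1 hu).1.symm) (by simp)
      (fun u hu x hx => by
        obtain ⟨hxw, hxv, -⟩ := hT.mem_branchFinset_of_mem_awayChildren hvw.symm hu hx
        simp [hxv, hxw]),
    hT.etaIn_eq_etaIn_filter_add_sum (c := w) (A := awayChildren T w v)
      (fun t ht => (hT.mem_awayChildren.1 ht).1.symm) (by simp)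
      (fun t ht x hx => by
        obtain ⟨hxv, hxw, hxA⟩ := hT.mem_branchFinset_of_mem_awayChildren hvw ht hx
        exact mem_filter.2 ⟨by simp [hxv, hxw], hxA⟩), hhost]
  ring

lemma etaIn_erase_singleton_eq (hT : T.IsTree) (hvw : v ≠ w) :
    etaIn T (univ.erase v) {w} =
      etaIn T ((hostSet T v w).erase v) {w} *
        ∏ t ∈ awayChildren T w v, (1 + etaIn T (branchFinset T t w) {t}) := by
  have hhost : ((univ.erase v).filter fun x =>
      ∀ u ∈ awayChildren T v w, x ∉ branchFinset T u v).filter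
        (fun x => ∀ t ∈ awayChildren T w v, x ∉ branchFinset T t w) =
      (hostSet T v w).erase v := by
    ext x
    simp only [mem_filter, mem_erase, mem_univ, mem_hostSet]
    tauto
  rw [hT.etaIn_eq_etaIn_filter_add_sum (c := v) (A := awayChildren T v w)
      (fun u hu => (hT.mem_awayChildren.1 hu).1.symm) (by simp)
      (fun u hu x hx => by
        simp [(hT.mem_branchFinset_of_mem_awayChildren hvw.symm hu hx).2.1]),
    sum_eq_zero fun u hu => etaIn_eq_zero_of_not_subset T
      (by simpa using (hT.mem_awayChildren.1 hu).2),
    add_zero, ← insert_empty, hT.etaIn_insert_eq_mul_prod (c := w) (A := awayChildren T w v)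
      (fun t ht => (hT.mem_awayChildren.1 ht).1.symm)
      (fun t ht x hx => by
        obtain ⟨hxv, -, hxA⟩ := hT.mem_branchFinset_of_mem_awayChildren hvw ht hx
        exact mem_filter.2 ⟨by simp [hxv], hxA⟩)
      (fun _ _ => disjoint_empty_left _), hhost]

lemma etaIn_pair_eq (hT : T.IsTree) (hvw : v ≠ w) :
    etaIn T univ {v, w} =
      etaIn T (hostSet T v w) {v, w} *
        (∏ u ∈ awayChildren T v w, (1 + etaIn T (branchFinset T u v) {u})) *
        (∏ t ∈ awayChildren T w v, (1 + etaIn T (branchFinset T t w) {t})) := by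
  have hhost : (univ.filter fun x => ∀ u ∈ awayChildren T v w, x ∉ branchFinset T u v).filter
        (fun x => ∀ t ∈ awayChildren T w v, x ∉ branchFinset T t w) = hostSet T v w := by
    ext x
    simp only [mem_filter, mem_univ, true_and, mem_hostSet]
  rw [hT.etaIn_insert_eq_mul_prod (c := v) (A := awayChildren T v w)
      (fun u hu => (hT.mem_awayChildren.1 hu).1.symm) (fun _ _ => subset_univ _)
      (fun u hu => disjoint_singleton_left.2 (hT.mem_awayChildren.1 hu).2),
    pair_comm, hT.etaIn_insert_eq_mul_prod (c := w) (A := awayChildren T w v)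
      (fun t ht => (hT.mem_awayChildren.1 ht).1.symm)
      (fun t ht x hx => mem_filter.2
        ⟨mem_univ x, (hT.mem_branchFinset_of_mem_awayChildren hvw ht hx).2.2⟩)
      (fun t ht => disjoint_singleton_left.2 (hT.mem_awayChildren.1 ht).2),
    pair_comm, hhost]
  ring

end SimpleGraph.IsTree

/-- the subtree-count decomposition formula for
`T = [A_1,…,A_k] v H w [B_1,…,B_ℓ]`.  Every tree `T` with two distinct vertices `v, w`
decomposes this way, with `A_i` the branches at `v` away from `w`, `B_j` the branches at
`w` away from `v`, and `H` (with leaves `v` and `w`) induced on `hostSet T v w`. -/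
theorem stmt6 [Fintype V] (T : SimpleGraph V) (hT : T.IsTree) (v w : V) (hvw : v ≠ w) :
    etaIn T Finset.univ ∅ =
      etaIn T (((hostSet T v w).erase v).erase w) ∅
      + ∑ u ∈ awayChildren T v w, etaIn T (branchFinset T u v) ∅
      + ∑ t ∈ awayChildren T w v, etaIn T (branchFinset T t w) ∅
      + etaIn T ((hostSet T v w).erase v) {w} *
          ∏ t ∈ awayChildren T w v, (1 + etaIn T (branchFinset T t w) {t})
      + etaIn T ((hostSet T v w).erase w) {v} *
          ∏ u ∈ awayChildren T v w, (1 + etaIn T (branchFinset T u v) {u})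
      + etaIn T (hostSet T v w) {v, w} *
          (∏ u ∈ awayChildren T v w, (1 + etaIn T (branchFinset T u v) {u})) *
          (∏ t ∈ awayChildren T w v, (1 + etaIn T (branchFinset T t w) {t})) := by
  have hv_side := hT.etaIn_erase_singleton_eq hvw.symm
  rw [hostSet_comm] at hv_side
  rw [etaIn_eq_etaIn_erase_add_etaIn_insert T univ ∅ v,
    etaIn_eq_etaIn_erase_add_etaIn_insert T (univ.erase v) ∅ w,
    insert_empty, insert_empty, etaIn_eq_etaIn_erase_add_etaIn_insert T univ {v} w, pair_comm,
    hT.etaIn_erase_erase_eq hvw, hT.etaIn_erase_singleton_eq hvw, hv_side, hT.etaIn_pair_eq hvw]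
  ring
end

section
/- Let T be a tree with n vertices and let r ≥ 1 be an integer. Then SW_r(T) = ∑_{uv ∈ E(T)} ∑_{i=1}^{r−1} C(|V(T_u)|, i)·C(|V(T_v)|, r−i) = ∑_{uv ∈ E(T)} ( C(n,r) − C(|V(T_u)|, r) − C(|V(T_v)|, r) ), where for an edge uv of T, T_u and T_v are the components of T−uv containing u and v respectively, and C(m,j) denotes the binomial coefficient (equal to 0 when j > m). -/
/-!
In a tree, deleting an edge `vw` splits the vertices into the branch of `v` and the branch of
`w`. The smallest subtree spanning `S` is the intersection of all branches containing `S`, and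
its edges are exactly the edges whose two branches both meet `S`. Hence `sd(S)` counts the edges
separating `S`, and exchanging the two summations gives `SW_r(T) = ∑_{vw} N(vw)`, where `N(vw)`
is the number of `r`-sets meeting both branches. If the branches have `a` and `b = n - a`
vertices, then `N(vw) = C(n, r) - C(a, r) - C(b, r)`, which is `∑_{0<i<r} C(a, i) C(b, r - i)` by
Vandermonde's identity.
-/

open scoped Classical
open Finset

universe u

variable {V : Type u}

/-- The Steiner distance of a vertex set `S` in `G`: the number of edges (i.e. the number
of vertices minus one) of a smallest connected induced subgraph containing `S`. -/
noncomputable def steinerDist (G : SimpleGraph V) [Fintype V] (S : Finset V) : ℕ :=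
  sInf {m : ℕ | ∃ t : Finset V, S ⊆ t ∧ (G.induce (↑t : Set V)).Connected ∧ t.card = m + 1}

/-- The Steiner `r`-Wiener index: the sum of Steiner distances of all `r`-element
vertex subsets. -/
noncomputable def steinerWiener (G : SimpleGraph V) [Fintype V] (r : ℕ) : ℕ :=
  ∑ S ∈ Finset.univ.powersetCard r, steinerDist G S

namespace Finset

theorem card_filter_not_subset_add_choose_add_choose {α : Type*} [Fintype α] [DecidableEq α]
    (A : Finset α) {r : ℕ} (hr : r ≠ 0) :
    #((univ.powersetCard r).filter fun S => ¬ S ⊆ A ∧ ¬ S ⊆ Aᶜ) + (#A).choose r +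
      (#Aᶜ).choose r = (Fintype.card α).choose r := by
  have hsplit := card_filter_add_card_filter_not (s := univ.powersetCard r)
    (p := fun S => ¬ S ⊆ A ∧ ¬ S ⊆ Aᶜ)
  have hrest : (univ.powersetCard r).filter (fun S => ¬ (¬ S ⊆ A ∧ ¬ S ⊆ Aᶜ)) =
      A.powersetCard r ∪ Aᶜ.powersetCard r := by
    ext S
    simp only [mem_filter, mem_powersetCard, mem_union, subset_univ, true_and]
    tauto
  have hdisj : Disjoint (A.powersetCard r) (Aᶜ.powersetCard r) := by
    refine disjoint_left.mpr fun S hSA hSAc => ?_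
    rw [mem_powersetCard] at hSA hSAc
    obtain ⟨x, hx⟩ := card_pos.mp (hSA.2 ▸ Nat.pos_of_ne_zero hr)
    exact mem_compl.mp (hSAc.1 hx) (hSA.1 hx)
  rw [hrest, card_union_of_disjoint hdisj, card_powersetCard, card_powersetCard,
    card_powersetCard, card_univ] at hsplit
  omega

end Finset

theorem Nat.add_choose_eq_sum_Ioo_add_choose_add_choose (a b : ℕ) {r : ℕ} (hr : r ≠ 0) :
    (a + b).choose r =
      ∑ i ∈ Finset.Ioo 0 r, a.choose i * b.choose (r - i) + a.choose r + b.choose r := by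
  rw [Nat.add_choose_eq, Finset.Nat.sum_antidiagonal_eq_sum_range_succ_mk]
  have hrange : Finset.range (r + 1) = insert 0 (insert r (Finset.Ioo 0 r)) := by
    ext i
    simp only [Finset.mem_range, Finset.mem_insert, Finset.mem_Ioo]
    omega
  rw [hrange, Finset.sum_insert (by simp only [Finset.mem_insert, Finset.mem_Ioo]; omega),
    Finset.sum_insert (by simp)]
  simp only [Nat.choose_zero_right, Nat.sub_self, Nat.sub_zero, one_mul, mul_one]
  omega

namespace SimpleGraph

variable {G T : SimpleGraph V} {v w x : V}

lemma Connected.reachable_deleteEdges_of_dist_le (hG : G.Connected) (hvw : G.Adj v w)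
    (h : G.dist x v ≤ G.dist x w) : (G.deleteEdges {s(v, w)}).Reachable x v := by
  obtain ⟨p, hp⟩ := hG.exists_walk_length_eq_dist x v
  have hw : w ∉ p.support := by
    intro hw
    have h1 : G.dist x w ≤ (p.takeUntil w hw).length := G.dist_le _
    have h2 : G.dist w v ≤ (p.dropUntil w hw).length := G.dist_le _
    have h3 : (p.takeUntil w hw).length + (p.dropUntil w hw).length = p.length := by
      rw [← Walk.length_append, Walk.take_spec]
    have h4 : 0 < G.dist w v := hG.pos_dist_of_ne hvw.ne'
    omega
  exact ⟨p.toDeleteEdge _ fun he => hw (p.snd_mem_support_of_mem_edges he)⟩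

lemma Connected.reachable_deleteEdges_or (hG : G.Connected) (hvw : G.Adj v w) (x : V) :
    (G.deleteEdges {s(v, w)}).Reachable x v ∨ (G.deleteEdges {s(v, w)}).Reachable x w := by
  rcases le_total (G.dist x v) (G.dist x w) with h | h
  · exact .inl (hG.reachable_deleteEdges_of_dist_le hvw h)
  · right
    rw [Sym2.eq_swap]
    exact hG.reachable_deleteEdges_of_dist_le hvw.symm h

lemma IsTree.not_reachable_deleteEdges (hT : T.IsTree) (hvw : T.Adj v w) :
    ¬ (T.deleteEdges {s(v, w)}).Reachable v w :=
  isBridge_iff.mp (isAcyclic_iff_forall_adj_isBridge.mp hT.isAcyclic hvw)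

variable [Fintype V]

lemma IsTree.mem_branchFinset_iff_reachable (hT : T.IsTree) (hvw : T.Adj v w) :
    x ∈ branchFinset T v w ↔ (T.deleteEdges {s(v, w)}).Reachable x v := by
  simp only [branchFinset, mem_insert, mem_filter, mem_univ, true_and]
  refine ⟨?_, fun h => .inr ?_⟩
  · rintro (rfl | h)
    · exact .rfl
    · exact hT.connected.reachable_deleteEdges_of_dist_le hvw h.le
  · by_contra hle
    have hxw := hT.connected.reachable_deleteEdges_of_dist_le hvw.symm (not_lt.mp hle)
    rw [Sym2.eq_swap] at hxw
    exact hT.not_reachable_deleteEdges hvw (h.symm.trans hxw)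

lemma IsTree.compl_branchFinset (hT : T.IsTree) (hvw : T.Adj v w) :
    (branchFinset T v w)ᶜ = branchFinset T w v := by
  ext x
  rw [mem_compl, hT.mem_branchFinset_iff_reachable hvw,
    hT.mem_branchFinset_iff_reachable hvw.symm, show s(w, v) = s(v, w) from Sym2.eq_swap]
  exact ⟨(hT.connected.reachable_deleteEdges_or hvw x).resolve_left,
    fun hxw hxv => hT.not_reachable_deleteEdges hvw (hxv.symm.trans hxw)⟩

lemma IsTree.card_branchFinset_add_card_branchFinset (hT : T.IsTree) (hvw : T.Adj v w) :
    #(branchFinset T v w) + #(branchFinset T w v) = Fintype.card V := by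
  rw [← hT.compl_branchFinset hvw, card_add_card_compl]

lemma IsTree.mem_edges_of_mem_branchFinset (hT : T.IsTree) (hvw : T.Adj v w) {a b : V}
    (p : T.Walk a b) (ha : a ∈ branchFinset T v w) (hb : b ∈ branchFinset T w v) :
    s(v, w) ∈ p.edges := by
  by_contra he
  rw [hT.mem_branchFinset_iff_reachable hvw] at ha
  rw [← hT.compl_branchFinset hvw, mem_compl, hT.mem_branchFinset_iff_reachable hvw] at hb
  exact hb ((Reachable.symm ⟨p.toDeleteEdge _ he⟩).trans ha)

/-- The convex hull of `S` in the tree `T`: the vertex set of the smallest subtree containing `S`,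
obtained as the intersection of all branches of `T` that contain `S`. -/
noncomputable def steinerHull (T : SimpleGraph V) (S : Finset V) : Finset V :=
  univ.filter fun x => ∀ v w, T.Adj v w → S ⊆ branchFinset T v w → x ∈ branchFinset T v w

noncomputable def adjPairsIn (T : SimpleGraph V) (t : Finset V) : Finset (V × V) :=
  univ.filter fun p => T.Adj p.1 p.2 ∧ p.1 ∈ t ∧ p.2 ∈ t

noncomputable def separatingPairs (T : SimpleGraph V) (S : Finset V) : Finset (V × V) :=
  univ.filter fun p =>
    T.Adj p.1 p.2 ∧ ¬ S ⊆ branchFinset T p.1 p.2 ∧ ¬ S ⊆ branchFinset T p.2 p.1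

variable {S : Finset V}

lemma subset_steinerHull (T : SimpleGraph V) (S : Finset V) : S ⊆ steinerHull T S :=
  fun _ hx => mem_filter.2 ⟨mem_univ _, fun _ _ _ hS => hS hx⟩

lemma IsTree.not_subset_branchFinset_of_mem_steinerHull (hT : T.IsTree) (hvw : T.Adj v w)
    (hv : v ∈ steinerHull T S) : ¬ S ⊆ branchFinset T w v := by
  intro hS
  have hv' := (mem_filter.1 hv).2 w v hvw.symm hS
  rw [← hT.compl_branchFinset hvw, mem_compl] at hv'
  exact hv' (mem_insert_self _ _)

lemma IsTree.mem_steinerHull_of_mem_support (hT : T.IsTree) {x y : V} {p : T.Walk x y}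
    (hp : p.IsTrail) (hx : x ∈ steinerHull T S) (hy : y ∈ steinerHull T S)
    {z : V} (hz : z ∈ p.support) : z ∈ steinerHull T S := by
  refine mem_filter.2 ⟨mem_univ _, fun v w hvw hS => ?_⟩
  -- otherwise `p` leaves the branch of `v` before `z` and re-enters it after `z`, using `vw` twice
  by_contra hzv
  rw [← mem_compl, hT.compl_branchFinset hvw] at hzv
  have hxv := (mem_filter.1 hx).2 v w hvw hS
  have hyv := (mem_filter.1 hy).2 v w hvw hS
  have htake := hT.mem_edges_of_mem_branchFinset hvw (p.takeUntil z hz) hxv hzv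
  have hdrop := hT.mem_edges_of_mem_branchFinset hvw.symm (p.dropUntil z hz) hzv hyv
  rw [Sym2.eq_swap] at hdrop
  exact hp.disjoint_edges_takeUntil_dropUntil hz htake hdrop

lemma IsTree.connected_induce_steinerHull (hT : T.IsTree) (hS : S.Nonempty) :
    (T.induce (steinerHull T S : Set V)).Connected := by
  obtain ⟨s, hs⟩ := hS
  have : Nonempty (steinerHull T S : Set V) := ⟨⟨s, subset_steinerHull T S hs⟩⟩
  refine ⟨fun ⟨x, hx⟩ ⟨y, hy⟩ => ?_⟩
  obtain ⟨p, hp⟩ := (hT.connected.preconnected x y).exists_isPath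
  exact (p.induce _ fun z hz => hT.mem_steinerHull_of_mem_support hp.isTrail hx hy hz).reachable

lemma IsTree.separatingPairs_subset_adjPairsIn (hT : T.IsTree) {t : Finset V} (hSt : S ⊆ t)
    (ht : (T.induce (t : Set V)).Connected) : separatingPairs T S ⊆ adjPairsIn T t := by
  rintro ⟨v, w⟩ hvw
  obtain ⟨-, hvw, hSv, hSw⟩ := mem_filter.1 hvw
  obtain ⟨a, haS, ha⟩ := not_subset.1 hSw
  obtain ⟨b, hbS, hb⟩ := not_subset.1 hSv
  rw [← hT.compl_branchFinset hvw, mem_compl, not_not] at ha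
  rw [← hT.compl_branchFinset hvw.symm, mem_compl, not_not] at hb
  obtain ⟨q⟩ := ht.preconnected ⟨a, hSt haS⟩ ⟨b, hSt hbS⟩
  set p := q.map (Embedding.induce (t : Set V)).toHom
  have hp : ∀ z ∈ p.support, z ∈ t := by
    simp only [p, Walk.support_map, List.mem_map]
    rintro _ ⟨z, -, rfl⟩
    exact z.2
  have he := hT.mem_edges_of_mem_branchFinset hvw p ha hb
  exact mem_filter.2 ⟨mem_univ _, hvw, hp v (p.fst_mem_support_of_mem_edges he),
    hp w (p.snd_mem_support_of_mem_edges he)⟩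

lemma IsTree.separatingPairs_eq_adjPairsIn_steinerHull (hT : T.IsTree) (hS : S.Nonempty) :
    separatingPairs T S = adjPairsIn T (steinerHull T S) := by
  refine (hT.separatingPairs_subset_adjPairsIn (subset_steinerHull T S)
    (hT.connected_induce_steinerHull hS)).antisymm ?_
  rintro ⟨v, w⟩ hvw
  obtain ⟨-, hvw, hv, hw⟩ := mem_filter.1 hvw
  exact mem_filter.2 ⟨mem_univ _, hvw, hT.not_subset_branchFinset_of_mem_steinerHull hvw.symm hw,
    hT.not_subset_branchFinset_of_mem_steinerHull hvw hv⟩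

lemma IsAcyclic.card_adjPairsIn (hT : T.IsAcyclic) {t : Finset V}
    (ht : (T.induce (t : Set V)).Connected) : #(adjPairsIn T t) = 2 * (#t - 1) := by
  have hedges := (IsTree.mk ht (hT.induce _)).card_edgeFinset
  have hmap : (univ.filter fun p : ↥(t : Set V) × ↥(t : Set V) =>
      (T.induce (t : Set V)).Adj p.1 p.2).map
        ((Function.Embedding.subtype _).prodMap (Function.Embedding.subtype _)) =
      adjPairsIn T t := by
    ext ⟨a, b⟩
    simp [adjPairsIn]
  rw [← hmap, card_map, ← two_mul_card_edgeFinset]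
  have hcard : Fintype.card (t : Set V) = #t := by simp
  omega

lemma IsTree.two_mul_steinerDist (hT : T.IsTree) (hS : S.Nonempty) :
    2 * steinerDist T S = #(separatingPairs T S) := by
  have hle : ∀ t : Finset V, S ⊆ t → (T.induce (t : Set V)).Connected →
      #(separatingPairs T S) ≤ 2 * (#t - 1) := fun t hSt ht =>
    (card_le_card (hT.separatingPairs_subset_adjPairsIn hSt ht)).trans_eq
      (hT.isAcyclic.card_adjPairsIn ht)
  have hhull : #(separatingPairs T S) = 2 * (#(steinerHull T S) - 1) := by
    rw [hT.separatingPairs_eq_adjPairsIn_steinerHull hS,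
      hT.isAcyclic.card_adjPairsIn (hT.connected_induce_steinerHull hS)]
  have hmem : #(steinerHull T S) - 1 ∈
      {m | ∃ t : Finset V, S ⊆ t ∧ (T.induce (t : Set V)).Connected ∧ #t = m + 1} :=
    ⟨_, subset_steinerHull T S, hT.connected_induce_steinerHull hS,
      by have := (hS.mono (subset_steinerHull T S)).card_pos; omega⟩
  have hdist : steinerDist T S = #(steinerHull T S) - 1 := by
    refine le_antisymm (Nat.sInf_le hmem) (le_csInf ⟨_, hmem⟩ ?_)
    rintro m ⟨t, hSt, ht, hm⟩
    have := hle t hSt ht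
    omega
  rw [hdist, hhull]

lemma IsTree.two_mul_steinerWiener (hT : T.IsTree) {r : ℕ} (hr : r ≠ 0) :
    2 * steinerWiener T r = ∑ v : V, ∑ w : V, if T.Adj v w then
      #((univ.powersetCard r).filter fun S =>
        ¬ S ⊆ branchFinset T v w ∧ ¬ S ⊆ branchFinset T w v) else 0 := by
  rw [steinerWiener, mul_sum]
  calc ∑ S ∈ univ.powersetCard r, 2 * steinerDist T S
      = ∑ S ∈ univ.powersetCard r, ∑ v : V, ∑ w : V, if T.Adj v w ∧
          ¬ S ⊆ branchFinset T v w ∧ ¬ S ⊆ branchFinset T w v then 1 else 0 := by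
        refine sum_congr rfl fun S hS => ?_
        have hne : S.Nonempty := card_pos.mp (by rw [(mem_powersetCard.mp hS).2]; omega)
        rw [hT.two_mul_steinerDist hne, separatingPairs, card_filter, ← univ_product_univ,
          sum_product]
    _ = ∑ v : V, ∑ w : V, ∑ S ∈ univ.powersetCard r, if T.Adj v w ∧
          ¬ S ⊆ branchFinset T v w ∧ ¬ S ⊆ branchFinset T w v then 1 else 0 := by
        rw [sum_comm]
        exact sum_congr rfl fun v _ => sum_comm
    _ = _ := by
        refine sum_congr rfl fun v _ => sum_congr rfl fun w _ => ?_
        by_cases hvw : T.Adj v w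
        · simp only [hvw, true_and, if_true, card_filter]
        · simp only [hvw, false_and, if_false, sum_const_zero]

end SimpleGraph

/-- Sums over edges are stated as sums over ordered adjacent pairs, i.e. twice the sums over
edges (whence the factor `2` on the left-hand sides). -/
theorem stmt10 [Fintype V] (T : SimpleGraph V) (hT : T.IsTree) (r : ℕ) (hr : 1 ≤ r) :
    (2 * steinerWiener T r =
      ∑ v : V, ∑ w : V,
        if T.Adj v w then
          ∑ i ∈ Finset.Ioo 0 r,
            ((branchFinset T v w).card.choose i) * ((branchFinset T w v).card.choose (r - i))
        else 0) ∧
    ((2 * steinerWiener T r : ℤ) =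
      ∑ v : V, ∑ w : V,
        if T.Adj v w then
          ((Fintype.card V).choose r : ℤ) - ((branchFinset T v w).card.choose r : ℤ) -
            ((branchFinset T w v).card.choose r : ℤ)
        else 0) := by
  have hr0 : r ≠ 0 := Nat.one_le_iff_ne_zero.mp hr
  have hcount (v w : V) (hvw : T.Adj v w) :
      #((univ.powersetCard r).filter fun S =>
        ¬ S ⊆ branchFinset T v w ∧ ¬ S ⊆ branchFinset T w v) +
          (#(branchFinset T v w)).choose r + (#(branchFinset T w v)).choose r =
        (Fintype.card V).choose r := by
    rw [← hT.compl_branchFinset hvw]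
    exact card_filter_not_subset_add_choose_add_choose _ hr0
  have hwiener := hT.two_mul_steinerWiener hr0
  refine ⟨hwiener.trans (sum_congr rfl fun v _ => sum_congr rfl fun w _ => ?_), ?_⟩
  · split_ifs with hvw
    · have hsum := Nat.add_choose_eq_sum_Ioo_add_choose_add_choose
        #(branchFinset T v w) #(branchFinset T w v) hr0
      rw [hT.card_branchFinset_add_card_branchFinset hvw] at hsum
      have := hcount v w hvw
      omega
    · rfl
  · rw [← Nat.cast_ofNat, ← Nat.cast_mul, hwiener]
    push_cast
    refine sum_congr rfl fun v _ => sum_congr rfl fun w _ => ?_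
    split_ifs with hvw
    · have := hcount v w hvw
      omega
    · rfl
end

section
/- Let x > 0 be a real number and let T = [T_1,…,T_k] be a rooted tree whose root has degree k ≥ 1. Then f(T,x) = ∏_{i=1}^k (rf(T_i,x) + f(T_i,x)) and rf(T,x) = (∏_{i=1}^k (rf(T_i,x) + f(T_i,x)))·( x + ∑_{i=1}^k rf(T_i,x)/(rf(T_i,x) + f(T_i,x)) ). Consequently, the quantity ρ_1(T,x) = rf(T,x)/(rf(T,x) + f(T,x)) satisfies ρ_1(T,x) = ( x + ∑_{i=1}^k ρ_1(T_i,x) ) / ( 1 + x + ∑_{i=1}^k ρ_1(T_i,x) ). -/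
open scoped Classical
open Finset

universe u

variable {V : Type u}

/-- The spanning forest of `G` determined by the edge set `F`, as a spanning subgraph. -/
noncomputable def forestGraph (F : Finset (Sym2 V)) : SimpleGraph V :=
  SimpleGraph.fromEdgeSet (↑F : Set (Sym2 V))

/-- `λ(F)`: the number of components of the spanning forest `F`. -/
noncomputable def numComponents (F : Finset (Sym2 V)) : ℕ :=
  Nat.card (forestGraph F).ConnectedComponent

/-- `γ(F)`: the number of ways to mark one vertex in each component of the spanning
forest `F`. -/
noncomputable def numMarkings (F : Finset (Sym2 V)) : ℕ :=
  Nat.card {m : (forestGraph F).ConnectedComponent → V //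
    ∀ c, (forestGraph F).connectedComponentMk (m c) = c}

/-- The number of ways to mark one vertex in each component of the spanning forest `F`
other than the component containing `r`. -/
noncomputable def numMarkingsAway (F : Finset (Sym2 V)) (r : V) : ℕ :=
  Nat.card {m : {c : (forestGraph F).ConnectedComponent //
      c ≠ (forestGraph F).connectedComponentMk r} → V //
    ∀ c, (forestGraph F).connectedComponentMk (m c) = (c : (forestGraph F).ConnectedComponent)}

/-- `rf(G,x) = ∑_F γ(F)·x^{λ(F)}`, the generating polynomial of marked spanning forests. -/
noncomputable def rfPoly (G : SimpleGraph V) [Fintype V] (x : ℝ) : ℝ :=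
  ∑ F ∈ G.edgeFinset.powerset, (numMarkings F : ℝ) * x ^ numComponents F

/-- `f(G,r,x) = ∑_F (#markings of all components except the root's)·x^{λ(F)−1}`. -/
noncomputable def fPoly (G : SimpleGraph V) [Fintype V] (r : V) (x : ℝ) : ℝ :=
  ∑ F ∈ G.edgeFinset.powerset, (numMarkingsAway F r : ℝ) * x ^ (numComponents F - 1)

/-- `ρ₁(G,r,x) = rf(G,x) / (rf(G,x) + f(G,r,x))`. -/
noncomputable def rho1 (G : SimpleGraph V) [Fintype V] (r : V) (x : ℝ) : ℝ :=
  rfPoly G x / (rfPoly G x + fPoly G r x)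


/-!
Deleting the root `r` splits `T` into the branches `T_u`, `u` a neighbour of `r`. A spanning
forest `F` of `T` is therefore the same as a spanning forest `F_u` of every branch together with
the set of root edges `r u` that `F` keeps. The component of `r` in `F` consists of `r` and the
root components of the `F_u` whose root edge is kept; every other component of `F` is a
component of some `F_u` and is not changed. So the weight `γ'(F) x^{λ(F) - 1}` counting markings
away from the root is a product over the branches of the `f`-weight of `F_u` (root edge kept) or
the `rf`-weight of `F_u` (root edge deleted); summing gives `f(T) = ∏ (rf(T_u) + f(T_u))`. For
`rf` one also marks the root component, of size `1 + ∑_{kept} |C_u|`, and distributing this sum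
over the product gives `rf(T) = x f(T) + ∑_u rf(T_u) ∏_{v ≠ u} (rf(T_v) + f(T_v))`. The
recursion for `ρ₁` is then algebra.
-/

namespace SimpleGraph

variable {G : SimpleGraph V} {r u u' x a b v w : V}

lemma Reachable.induction_on_adj {P : V → Prop} (h : G.Reachable v w)
    (hP : ∀ a b, G.Adj a b → P a → P b) (hv : P v) : P w := by
  obtain ⟨p⟩ := h
  induction p with
  | nil => exact hv
  | cons hab _ ih => exact ih (hP _ _ hab hv)

lemma Connected.exists_adj_dist_lt (hG : G.Connected) (hx : x ≠ r) :
    ∃ u, G.Adj r u ∧ G.dist x u < G.dist x r := by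
  obtain ⟨p, hp⟩ := hG.exists_walk_length_eq_dist r x
  cases p with
  | nil => exact absurd rfl hx
  | cons h q =>
    refine ⟨_, h, ?_⟩
    rw [dist_comm, dist_comm (u := x), ← hp, Walk.length_cons]
    exact Nat.lt_succ_of_le (dist_le q)

lemma Connected.dist_lt_of_adj (hG : G.Connected) (hab : G.Adj a b)
    (hr : G.dist a r < G.dist b r) (ha : G.dist a u < G.dist a r) :
    G.dist b u < G.dist b r := by
  have := hG.dist_triangle (u := b) (v := a) (w := u)
  have := dist_eq_one_iff_adj.mpr hab.symm
  omega

lemma IsTree.mem_support_of_dist_lt (hG : G.IsTree) (hu : G.Adj r u)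
    (h : G.dist x u < G.dist x r) {q : G.Walk x r} (hq : q.IsPath) : u ∈ q.support := by
  obtain ⟨p, hp, hpl⟩ := hG.connected.exists_path_of_dist x u
  refine hG.isAcyclic.mem_support_of_ne_mem_support_of_adj_of_isPath hq hp hu fun hr => ?_
  have := dist_le (p.takeUntil r hr)
  have := p.length_takeUntil_le_length hr
  omega

lemma IsTree.eq_of_adj_of_dist_lt (hG : G.IsTree) (hu : G.Adj r u) (hu' : G.Adj r u')
    (h : G.dist x u < G.dist x r) (h' : G.dist x u' < G.dist x r) : u = u' := by
  obtain ⟨q, hq, -⟩ := hG.connected.exists_path_of_dist x r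
  rw [hG.isAcyclic.eq_penultimate_of_adj_end hq hu (hG.mem_support_of_dist_lt hu h hq),
    hG.isAcyclic.eq_penultimate_of_adj_end hq hu' (hG.mem_support_of_dist_lt hu' h' hq)]

end SimpleGraph

open SimpleGraph

lemma Nat.card_sections {α β ι : Type*} [Fintype ι] (f : α → β) (g : ι → β) :
    Nat.card {m : ι → α // ∀ i, f (m i) = g i} = ∏ i, Nat.card {a // f a = g i} := by
  rw [Nat.card_congr (Equiv.subtypePiEquivPi (p := fun i a => f a = g i)), Nat.card_pi]

lemma Nat.card_subtype_imp_ne {α : Type*} [Finite α] (b : Bool) (a : α) :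
    Nat.card {c // b → c ≠ a} = if b then Nat.card α - 1 else Nat.card α := by
  cases b
  · simp
  · rw [if_pos rfl, ← Nat.card_congr (Equiv.optionSubtypeNe a), Finite.card_option]
    simp

lemma Fintype.prod_subtype_imp_ne {α M : Type*} [Fintype α] [CommMonoid M] (b : Bool) (a : α)
    (f : α → M) [Fintype {c // b → c ≠ a}] [Fintype {c // c ≠ a}] :
    ∏ c : {c // b → c ≠ a}, f c = if b then ∏ c : {c // c ≠ a}, f c else ∏ c, f c := by
  cases b
  · rw [if_neg Bool.false_ne_true, ← Finset.prod_subtype univ (by simp)]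
  · rw [if_pos rfl, ← Finset.prod_subtype (univ.erase a) (by simp),
      ← Finset.prod_subtype (univ.erase a) (by simp)]

lemma Finset.sum_piFinset_sum_mul_prod_erase {ι R : Type*} {κ : ι → Type*} [Fintype ι]
    [DecidableEq ι] [CommSemiring R] (t : ∀ i, Finset (κ i)) (f g : ∀ i, κ i → R) :
    ∑ p ∈ Fintype.piFinset t, ∑ i, f i (p i) * ∏ j ∈ univ.erase i, g j (p j) =
      ∑ i, (∑ a ∈ t i, f i a) * ∏ j ∈ univ.erase i, ∑ a ∈ t j, g j a := by
  rw [Finset.sum_comm]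
  refine Finset.sum_congr rfl fun i _ => ?_
  have hne : ∀ j ∈ univ.erase i, Function.update g i (f i) j = g j := fun j hj =>
    Function.update_of_ne (Finset.ne_of_mem_erase hj) _ _
  calc ∑ p ∈ Fintype.piFinset t, f i (p i) * ∏ j ∈ univ.erase i, g j (p j)
      = ∑ p ∈ Fintype.piFinset t, ∏ j, Function.update g i (f i) j (p j) :=
        Finset.sum_congr rfl fun p _ => by
          rw [← Finset.mul_prod_erase univ _ (mem_univ i), Function.update_self]
          exact congrArg _ (Finset.prod_congr rfl fun j hj => by rw [hne j hj])
    _ = ∏ j, ∑ a ∈ t j, Function.update g i (f i) j a := (Finset.prod_univ_sum t _).symm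
    _ = (∑ a ∈ t i, f i a) * ∏ j ∈ univ.erase i, ∑ a ∈ t j, g j a := by
          rw [← Finset.mul_prod_erase univ _ (mem_univ i), Function.update_self]
          exact congrArg _ (Finset.prod_congr rfl fun j hj => by rw [hne j hj])

section Forests

variable {W : Type u}

lemma forestGraph_adj {F : Finset (Sym2 W)} {v w : W} :
    (forestGraph F).Adj v w ↔ s(v, w) ∈ F ∧ v ≠ w := by
  simp [forestGraph]

variable [Fintype W]

lemma numMarkings_eq_prod (F : Finset (Sym2 W)) :
    numMarkings F = ∏ c : (forestGraph F).ConnectedComponent, Nat.card c.supp :=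
  Nat.card_sections _ id

lemma numMarkingsAway_eq_prod (F : Finset (Sym2 W)) (r : W) :
    numMarkingsAway F r =
      ∏ c : {c // c ≠ (forestGraph F).connectedComponentMk r}, Nat.card c.1.supp :=
  Nat.card_sections _ Subtype.val

lemma numMarkings_eq_card_supp_mul (F : Finset (Sym2 W)) (r : W) :
    numMarkings F =
      Nat.card ((forestGraph F).connectedComponentMk r).supp * numMarkingsAway F r := by
  rw [numMarkings_eq_prod, numMarkingsAway_eq_prod, Fintype.prod_eq_mul_prod_subtype_ne]

lemma numComponents_eq_card_ne_add_one (F : Finset (Sym2 W)) (r : W) :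
    numComponents F = Nat.card {c // c ≠ (forestGraph F).connectedComponentMk r} + 1 := by
  rw [numComponents, ← Finite.card_option, Nat.card_congr (Equiv.optionSubtypeNe _)]

lemma numMarkings_pos (F : Finset (Sym2 W)) : 0 < numMarkings F := by
  rw [numMarkings_eq_prod]
  exact Finset.prod_pos fun c _ =>
    Nat.card_pos_iff.mpr ⟨c.nonempty_supp.to_subtype, inferInstance⟩

lemma numComponents_pos [Nonempty W] (F : Finset (Sym2 W)) : 0 < numComponents F := by
  rw [numComponents_eq_card_ne_add_one F (Classical.arbitrary W)]
  omega

end Forests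

section Branches

variable [Fintype V] {T : SimpleGraph V} {r u v w : V}

@[simp]
lemma mem_nbrs_s12 : u ∈ nbrs T v ↔ T.Adj v u := by
  simp [nbrs]

lemma root_notMem_branchFinset (hu : u ≠ r) : r ∉ branchFinset T u r := by
  simp [branchFinset, hu.symm]

lemma ne_root_of_mem_branchFinset {i : nbrs T r} (hv : v ∈ branchFinset T i r) : v ≠ r := by
  rintro rfl
  exact root_notMem_branchFinset (mem_nbrs_s12.mp i.2).ne' hv

lemma mem_branchFinset_iff_s12 (hT : T.Connected) (hu : T.Adj r u) :
    v ∈ branchFinset T u r ↔ T.dist v u < T.dist v r := by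
  simp only [branchFinset, Finset.mem_insert, Finset.mem_filter, Finset.mem_univ, true_and,
    or_iff_right_iff_imp]
  rintro rfl
  simpa using hT.pos_dist_of_ne hu.ne'

lemma exists_mem_branchFinset (hT : T.Connected) (hv : v ≠ r) :
    ∃ i : nbrs T r, v ∈ branchFinset T i r := by
  obtain ⟨u, hu, h⟩ := hT.exists_adj_dist_lt hv
  exact ⟨⟨u, mem_nbrs_s12.mpr hu⟩, (mem_branchFinset_iff_s12 hT hu).mpr h⟩

lemma eq_of_mem_branchFinset (hT : T.IsTree) {i j : nbrs T r}
    (hi : v ∈ branchFinset T i r) (hj : v ∈ branchFinset T j r) : i = j := by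
  have hi' := mem_nbrs_s12.mp i.2
  have hj' := mem_nbrs_s12.mp j.2
  exact Subtype.ext <| hT.eq_of_adj_of_dist_lt hi' hj'
    ((mem_branchFinset_iff_s12 hT.connected hi').mp hi) ((mem_branchFinset_iff_s12 hT.connected hj').mp hj)

lemma mem_branchFinset_of_adj (hT : T.IsTree) (i : nbrs T r) (hvw : T.Adj v w) (hw : w ≠ r)
    (hv : v ∈ branchFinset T i r) : w ∈ branchFinset T i r := by
  have hi := mem_nbrs_s12.mp i.2
  have := dist_comm (G := T) (u := v) (v := r)
  have := dist_comm (G := T) (u := w) (v := r)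
  rcases hT.dist_eq_dist_add_one_of_adj r hvw with h | h
  · obtain ⟨j, hj⟩ := exists_mem_branchFinset hT.connected hw
    have hj' := mem_nbrs_s12.mp j.2
    rw [mem_branchFinset_iff_s12 hT.connected hj'] at hj
    have : v ∈ branchFinset T j r := (mem_branchFinset_iff_s12 hT.connected hj').mpr <|
      hT.connected.dist_lt_of_adj hvw.symm (by omega) hj
    rwa [eq_of_mem_branchFinset hT hv this, mem_branchFinset_iff_s12 hT.connected hj']
  · rw [mem_branchFinset_iff_s12 hT.connected hi] at hv ⊢
    exact hT.connected.dist_lt_of_adj hvw (by omega) hv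

end Branches

section Glue

variable [Fintype V] {T : SimpleGraph V} {r : V}
  (q : (i : nbrs T r) → Finset (Sym2 (branchFinset T i r : Set V)) × Bool)

/-- The spanning forest of `T` with forest `(q i).1` on the branch at `i`, which keeps the root
edge `r i` iff `(q i).2`. -/
noncomputable def gluedForest : Finset (Sym2 V) :=
  (univ.filter fun i => (q i).2).image (fun i : nbrs T r => s(r, i)) ∪
    univ.biUnion fun i => (q i).1.image (Sym2.map Subtype.val)

def gluedRootSet : Set V :=
  {v | v = r ∨ ∃ i, (q i).2 ∧ ∃ h : v ∈ (branchFinset T i r : Set V),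
    (forestGraph (q i).1).Reachable ⟨v, h⟩ (branchRoot T i r)}

def branchHom (i : nbrs T r) : forestGraph (q i).1 →g forestGraph (gluedForest q) where
  toFun := Subtype.val
  map_rel' {a b} h := by
    rw [forestGraph_adj] at h ⊢
    refine ⟨Finset.mem_union_right _ ?_, fun hab => h.2 (Subtype.ext hab)⟩
    exact Finset.mem_biUnion.mpr ⟨i, mem_univ _, Finset.mem_image.mpr ⟨_, h.1, rfl⟩⟩

abbrev DetachedComponent : Type u :=
  Σ i : nbrs T r, {c : (forestGraph (q i).1).ConnectedComponent //
    (q i).2 → c ≠ (forestGraph (q i).1).connectedComponentMk (branchRoot T i r)}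

variable {q}

noncomputable def DetachedComponent.glue (s : DetachedComponent q) :
    (forestGraph (gluedForest q)).ConnectedComponent :=
  s.2.1.map (branchHom q s.1)

@[simp]
lemma branchHom_apply {i : nbrs T r} (a : (branchFinset T i r : Set V)) : branchHom q i a = a :=
  rfl

lemma adj_gluedForest_root {i : nbrs T r} (hi : (q i).2) :
    (forestGraph (gluedForest q)).Adj r i := by
  rw [forestGraph_adj]
  refine ⟨Finset.mem_union_left _ ?_, (mem_nbrs_s12.mp i.2).ne⟩
  exact Finset.mem_image.mpr ⟨i, Finset.mem_filter.mpr ⟨mem_univ _, hi⟩, rfl⟩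

lemma gluedForest_adj_cases {v w : V} (h : (forestGraph (gluedForest q)).Adj v w) :
    (∃ i : nbrs T r, (q i).2 ∧ (v = r ∧ w = i ∨ v = i ∧ w = r)) ∨
      ∃ i : nbrs T r, ∃ (hv : v ∈ (branchFinset T i r : Set V))
        (hw : w ∈ (branchFinset T i r : Set V)), (forestGraph (q i).1).Adj ⟨v, hv⟩ ⟨w, hw⟩ := by
  obtain ⟨hmem, hne⟩ := forestGraph_adj.mp h
  rw [gluedForest, Finset.mem_union, Finset.mem_image, Finset.mem_biUnion] at hmem
  rcases hmem with ⟨i, hi, he⟩ | ⟨i, -, hi⟩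
  · refine Or.inl ⟨i, (Finset.mem_filter.mp hi).2, ?_⟩
    rw [Sym2.eq_iff] at he
    tauto
  · obtain ⟨e, he, hee⟩ := Finset.mem_image.mp hi
    induction e using Sym2.ind with
    | _ a b =>
      rw [Sym2.map_mk, Sym2.eq_iff] at hee
      refine Or.inr ⟨i, ?_⟩
      rcases hee with ⟨rfl, rfl⟩ | ⟨rfl, rfl⟩
      · exact ⟨a.2, b.2, forestGraph_adj.mpr ⟨he, fun hab => hne (congrArg Subtype.val hab)⟩⟩
      · refine ⟨b.2, a.2, forestGraph_adj.mpr ⟨Sym2.eq_swap ▸ he, fun hab => hne ?_⟩⟩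
        exact congrArg Subtype.val hab

lemma reachable_root_of_mem_gluedRootSet {v : V} (hv : v ∈ gluedRootSet q) :
    (forestGraph (gluedForest q)).Reachable v r := by
  rcases hv with rfl | ⟨i, hi, h, hre⟩
  · rfl
  · exact (hre.map (branchHom q i)).trans (adj_gluedForest_root hi).reachable.symm

lemma mem_gluedRootSet_iff (hT : T.IsTree) {i : nbrs T r} (a : (branchFinset T i r : Set V)) :
    ↑a ∈ gluedRootSet q ↔ (q i).2 ∧ (forestGraph (q i).1).Reachable a (branchRoot T i r) := by
  constructor
  · rintro (h | ⟨j, hj, h, hre⟩)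
    · exact absurd h (ne_root_of_mem_branchFinset a.2)
    · obtain rfl := eq_of_mem_branchFinset hT h a.2
      exact ⟨hj, hre⟩
  · exact fun ⟨hi, hre⟩ => Or.inr ⟨i, hi, a.2, hre⟩

lemma supp_gluedForest_root (hT : T.IsTree) :
    ((forestGraph (gluedForest q)).connectedComponentMk r).supp = gluedRootSet q := by
  refine Set.ext fun v =>
    (ConnectedComponent.mem_supp_iff _ _).trans ⟨fun hv => ?_, fun hv => ?_⟩
  · refine (ConnectedComponent.exact hv).symm.induction_on_adj ?_ (Or.inl rfl)
    intro v w hvw hv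
    rcases gluedForest_adj_cases hvw with ⟨i, hi, ⟨-, rfl⟩ | ⟨-, rfl⟩⟩ | ⟨i, hv', hw, hadj⟩
    · exact Or.inr ⟨i, hi, mem_insert_self _ _, .rfl⟩
    · exact Or.inl rfl
    · obtain ⟨hi, hre⟩ := (mem_gluedRootSet_iff hT ⟨v, hv'⟩).mp hv
      exact Or.inr ⟨i, hi, hw, hadj.symm.reachable.trans hre⟩
  · exact ConnectedComponent.sound (reachable_root_of_mem_gluedRootSet hv)

lemma reachable_gluedForest_iff (hT : T.IsTree) {i : nbrs T r}
    {a : (branchFinset T i r : Set V)} (ha : ↑a ∉ gluedRootSet q) {w : V} :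
    (forestGraph (gluedForest q)).Reachable a w ↔
      ∃ hw : w ∈ (branchFinset T i r : Set V), (forestGraph (q i).1).Reachable a ⟨w, hw⟩ := by
  refine ⟨fun h => h.induction_on_adj (P := fun w => ∃ hw : w ∈ (branchFinset T i r : Set V),
    (forestGraph (q i).1).Reachable a ⟨w, hw⟩) ?_ ⟨a.2, .rfl⟩,
    fun ⟨hw, h⟩ => h.map (branchHom q i)⟩
  rintro v w hvw ⟨hv, hre⟩
  rcases gluedForest_adj_cases hvw with ⟨j, hj, ⟨rfl, -⟩ | ⟨rfl, rfl⟩⟩ | ⟨j, hv', hw, hadj⟩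
  · exact absurd rfl (ne_root_of_mem_branchFinset hv)
  · obtain rfl := eq_of_mem_branchFinset hT (mem_insert_self _ _) hv
    exact absurd ((mem_gluedRootSet_iff hT a).mpr ⟨hj, hre⟩) ha
  · obtain rfl := eq_of_mem_branchFinset hT hv' hv
    exact ⟨hw, hre.trans hadj.reachable⟩

lemma DetachedComponent.supp_glue (hT : T.IsTree) (s : DetachedComponent q) :
    s.glue.supp = Subtype.val '' s.2.1.supp := by
  obtain ⟨i, c, hc⟩ := s
  induction c using ConnectedComponent.ind with | h a =>
  have ha : ↑a ∉ gluedRootSet q := fun h => by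
    obtain ⟨hi, hre⟩ := (mem_gluedRootSet_iff hT a).mp h
    exact hc hi (ConnectedComponent.sound hre)
  ext w
  simp only [glue, ConnectedComponent.map_mk, ConnectedComponent.mem_supp_iff, Set.mem_image,
    ConnectedComponent.eq, branchHom_apply]
  rw [reachable_comm, reachable_gluedForest_iff hT ha]
  constructor
  · rintro ⟨hw, h⟩
    exact ⟨⟨w, hw⟩, h.symm, rfl⟩
  · rintro ⟨b, h, rfl⟩
    exact ⟨b.2, h.symm⟩

lemma DetachedComponent.glue_ne_root (hT : T.IsTree) (s : DetachedComponent q) :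
    s.glue ≠ (forestGraph (gluedForest q)).connectedComponentMk r := fun h => by
  have hr : r ∈ s.glue.supp := h ▸ (ConnectedComponent.mem_supp_iff _ _).mpr rfl
  obtain ⟨b, -, hb⟩ := (s.supp_glue hT).subst (motive := (r ∈ ·)) hr
  exact ne_root_of_mem_branchFinset b.2 hb

lemma DetachedComponent.glue_injective (hT : T.IsTree) :
    Function.Injective (DetachedComponent.glue (q := q)) := by
  rintro ⟨i, c, hc⟩ ⟨j, d, hd⟩ h
  have hs := congrArg ConnectedComponent.supp h
  rw [supp_glue hT, supp_glue hT] at hs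
  obtain ⟨a, ha⟩ := c.nonempty_supp
  obtain ⟨b, -, hab⟩ := hs ▸ Set.mem_image_of_mem Subtype.val ha
  obtain rfl : i = j := eq_of_mem_branchFinset hT a.2 (hab ▸ b.2)
  obtain rfl : c = d :=
    ConnectedComponent.supp_injective (Set.image_injective.mpr Subtype.val_injective hs)
  rfl

lemma DetachedComponent.exists_glue_eq (hT : T.IsTree)
    {c : (forestGraph (gluedForest q)).ConnectedComponent}
    (hc : c ≠ (forestGraph (gluedForest q)).connectedComponentMk r) :
    ∃ s : DetachedComponent q, s.glue = c := by
  induction c using ConnectedComponent.ind with | h v =>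
  have hv : v ≠ r := by
    rintro rfl
    exact hc rfl
  obtain ⟨i, hvi⟩ := exists_mem_branchFinset hT.connected hv
  refine ⟨⟨i, (forestGraph (q i).1).connectedComponentMk ⟨v, hvi⟩, fun hi h => hc ?_⟩,
    ConnectedComponent.map_mk _ _⟩
  have := (mem_gluedRootSet_iff hT ⟨v, hvi⟩).mpr ⟨hi, ConnectedComponent.exact h⟩
  rwa [← supp_gluedForest_root hT, ConnectedComponent.mem_supp_iff] at this

noncomputable def detachedComponentEquiv (hT : T.IsTree) :
    DetachedComponent q ≃ {c // c ≠ (forestGraph (gluedForest q)).connectedComponentMk r} :=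
  Equiv.ofBijective (fun s => ⟨s.glue, s.glue_ne_root hT⟩)
    ⟨fun _ _ h => DetachedComponent.glue_injective hT (congrArg Subtype.val h),
      fun c => (DetachedComponent.exists_glue_eq hT c.2).imp fun _ h => Subtype.ext h⟩

@[simp]
lemma detachedComponentEquiv_apply (hT : T.IsTree) (s : DetachedComponent q) :
    (detachedComponentEquiv hT s : (forestGraph (gluedForest q)).ConnectedComponent) = s.glue :=
  rfl

end Glue

section GluedCounts

variable [Fintype V] {T : SimpleGraph V} {r : V}
  {q : (i : nbrs T r) → Finset (Sym2 (branchFinset T i r : Set V)) × Bool}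

lemma DetachedComponent.card_supp_glue (hT : T.IsTree) (s : DetachedComponent q) :
    Nat.card s.glue.supp = Nat.card s.2.1.supp := by
  rw [s.supp_glue hT, Nat.card_image_of_injective Subtype.val_injective]

lemma numComponents_gluedForest (hT : T.IsTree) :
    numComponents (gluedForest q) =
      ∑ i, (if (q i).2 then numComponents (q i).1 - 1 else numComponents (q i).1) + 1 := by
  rw [numComponents_eq_card_ne_add_one _ r, ← Nat.card_congr (detachedComponentEquiv hT),
    Nat.card_sigma]
  simp only [Nat.card_subtype_imp_ne, numComponents]

lemma numMarkingsAway_gluedForest (hT : T.IsTree) :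
    numMarkingsAway (gluedForest q) r =
      ∏ i, if (q i).2 then numMarkingsAway (q i).1 (branchRoot T i r)
        else numMarkings (q i).1 := by
  rw [numMarkingsAway_eq_prod, ← (detachedComponentEquiv hT).prod_comp, Fintype.prod_sigma]
  refine Fintype.prod_congr _ _ fun i => ?_
  rw [numMarkingsAway_eq_prod, numMarkings_eq_prod]
  simp only [detachedComponentEquiv_apply, DetachedComponent.card_supp_glue hT]
  -- `convert` only has to identify two `Fintype` instances on the component type
  convert Fintype.prod_subtype_imp_ne (q i).2
    ((forestGraph (q i).1).connectedComponentMk (branchRoot T i r)) fun c => Nat.card c.supp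

variable (q) in
def gluedRootSetParam : Option (Σ i : nbrs T r, {a : (branchFinset T i r : Set V) //
    (q i).2 ∧ (forestGraph (q i).1).Reachable a (branchRoot T i r)}) → V :=
  fun o => o.elim r fun s => s.2.1

lemma gluedRootSetParam_injective (hT : T.IsTree) : (gluedRootSetParam q).Injective := by
  rintro (_ | ⟨i, a, ha⟩) (_ | ⟨j, b, hb⟩) h
  · rfl
  · exact (ne_root_of_mem_branchFinset b.2 h.symm).elim
  · exact (ne_root_of_mem_branchFinset a.2 h).elim
  · obtain rfl : i = j := eq_of_mem_branchFinset hT a.2 ((show (a : V) = b from h) ▸ b.2)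
    obtain rfl : a = b := Subtype.ext h
    rfl

lemma range_gluedRootSetParam : Set.range (gluedRootSetParam q) = gluedRootSet q := by
  ext v
  constructor
  · rintro ⟨_ | ⟨i, a, hi, hre⟩, rfl⟩
    · exact Or.inl rfl
    · exact Or.inr ⟨i, hi, a.2, hre⟩
  · rintro (rfl | ⟨i, hi, hv, hre⟩)
    · exact ⟨none, rfl⟩
    · exact ⟨some ⟨i, ⟨v, hv⟩, hi, hre⟩, rfl⟩

lemma card_supp_gluedForest_root (hT : T.IsTree) :
    Nat.card ((forestGraph (gluedForest q)).connectedComponentMk r).supp =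
      ∑ i, (if (q i).2 then
        Nat.card ((forestGraph (q i).1).connectedComponentMk (branchRoot T i r)).supp
        else 0) + 1 := by
  rw [supp_gluedForest_root hT, ← range_gluedRootSetParam,
    Nat.card_range_of_injective (gluedRootSetParam_injective hT), Finite.card_option,
    Nat.card_sigma]
  congr 1
  refine Finset.sum_congr rfl fun i _ => ?_
  split_ifs with hi
  · exact Nat.card_congr (Equiv.subtypeEquivRight fun a => by
      rw [ConnectedComponent.mem_supp_iff, ConnectedComponent.eq]; simp [hi])
  · simp [hi]

end GluedCounts

section EdgeSplitting

variable [Fintype V] {T : SimpleGraph V} {r : V}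
  {q : (i : nbrs T r) → Finset (Sym2 (branchFinset T i r : Set V)) × Bool}

variable (T r) in
noncomputable def branchChoices :
    Finset ((i : nbrs T r) → Finset (Sym2 (branchFinset T i r : Set V)) × Bool) :=
  Fintype.piFinset fun i => (branchGraph T i r).edgeFinset.powerset ×ˢ univ

variable (T r) in
noncomputable def splitForest (F : Finset (Sym2 V)) (i : nbrs T r) :
    Finset (Sym2 (branchFinset T i r : Set V)) × Bool :=
  (F.preimage (Sym2.map Subtype.val) (Sym2.map.injective Subtype.val_injective).injOn,
    decide (s(r, ↑i) ∈ F))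

@[simp]
lemma mem_splitForest_fst {F : Finset (Sym2 V)} {i : nbrs T r}
    {e : Sym2 (branchFinset T i r : Set V)} :
    e ∈ (splitForest T r F i).1 ↔ e.map Subtype.val ∈ F := by
  simp [splitForest]

lemma map_val_mem_edgeFinset {i : nbrs T r} {e : Sym2 (branchFinset T i r : Set V)} :
    e.map Subtype.val ∈ T.edgeFinset ↔ e ∈ (branchGraph T i r).edgeFinset := by
  induction e using Sym2.ind with
  | _ a b =>
    simp only [mem_edgeFinset, Sym2.map_mk, mem_edgeSet]
    rfl

lemma mem_branchFinset_of_mem_map {i : nbrs T r} {e : Sym2 (branchFinset T i r : Set V)} {v : V}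
    (hv : v ∈ e.map Subtype.val) : v ∈ branchFinset T i r := by
  obtain ⟨a, -, rfl⟩ := Sym2.mem_map.mp hv
  exact a.2

lemma map_val_mem_gluedForest (hT : T.IsTree) {i : nbrs T r}
    {e : Sym2 (branchFinset T i r : Set V)} :
    e.map Subtype.val ∈ gluedForest q ↔ e ∈ (q i).1 := by
  refine ⟨fun h => ?_, fun h => Finset.mem_union_right _ <|
    Finset.mem_biUnion.mpr ⟨i, mem_univ _, Finset.mem_image_of_mem _ h⟩⟩
  rcases Finset.mem_union.mp h with h | h
  · obtain ⟨j, -, hj⟩ := Finset.mem_image.mp h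
    have hr : r ∈ e.map Subtype.val := hj ▸ Sym2.mem_mk_left _ _
    exact absurd rfl (ne_root_of_mem_branchFinset (mem_branchFinset_of_mem_map hr))
  · obtain ⟨j, -, hj⟩ := Finset.mem_biUnion.mp h
    obtain ⟨e', he', hee'⟩ := Finset.mem_image.mp hj
    induction e using Sym2.ind with
    | _ a b =>
      have ha : ↑a ∈ e'.map Subtype.val := hee' ▸ Sym2.mem_mk_left _ _
      obtain rfl : j = i := eq_of_mem_branchFinset hT (mem_branchFinset_of_mem_map ha) a.2
      rwa [← Sym2.map.injective Subtype.val_injective hee']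

lemma root_edge_mem_gluedForest (i : nbrs T r) : s(r, ↑i) ∈ gluedForest q ↔ (q i).2 := by
  refine ⟨fun h => ?_, fun h => Finset.mem_union_left _ <|
    Finset.mem_image.mpr ⟨i, Finset.mem_filter.mpr ⟨mem_univ _, h⟩, rfl⟩⟩
  rcases Finset.mem_union.mp h with h | h
  · obtain ⟨j, hj, hji⟩ := Finset.mem_image.mp h
    rcases Sym2.eq_iff.mp hji with ⟨-, hji⟩ | ⟨hr, -⟩
    · exact Subtype.ext hji ▸ (Finset.mem_filter.mp hj).2
    · exact absurd hr (mem_nbrs_s12.mp i.2).ne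
  · obtain ⟨j, -, hj⟩ := Finset.mem_biUnion.mp h
    obtain ⟨e', -, hee'⟩ := Finset.mem_image.mp hj
    have hr : r ∈ e'.map Subtype.val := hee' ▸ Sym2.mem_mk_left _ _
    exact absurd rfl (ne_root_of_mem_branchFinset (mem_branchFinset_of_mem_map hr))

lemma gluedForest_subset (hq : ∀ i, (q i).1 ⊆ (branchGraph T i r).edgeFinset) :
    gluedForest q ⊆ T.edgeFinset := by
  intro e he
  rcases Finset.mem_union.mp he with he | he
  · obtain ⟨i, -, rfl⟩ := Finset.mem_image.mp he
    exact mem_edgeFinset.mpr (mem_nbrs_s12.mp i.2)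
  · obtain ⟨i, -, he⟩ := Finset.mem_biUnion.mp he
    obtain ⟨e', he', rfl⟩ := Finset.mem_image.mp he
    exact map_val_mem_edgeFinset.mpr (hq i he')

lemma splitForest_gluedForest (hT : T.IsTree) : splitForest T r (gluedForest q) = q := by
  funext i
  refine Prod.ext (Finset.ext fun e => ?_) ?_
  · rw [mem_splitForest_fst, map_val_mem_gluedForest hT]
  · simp only [splitForest, root_edge_mem_gluedForest, Bool.decide_eq_true]

lemma gluedForest_splitForest (hT : T.IsTree) {F : Finset (Sym2 V)} (hF : F ⊆ T.edgeFinset) :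
    gluedForest (splitForest T r F) = F := by
  ext e
  constructor
  · intro he
    rcases Finset.mem_union.mp he with he | he
    · obtain ⟨i, hi, rfl⟩ := Finset.mem_image.mp he
      simpa [splitForest] using hi
    · obtain ⟨i, -, he⟩ := Finset.mem_biUnion.mp he
      obtain ⟨e', he', rfl⟩ := Finset.mem_image.mp he
      exact mem_splitForest_fst.mp he'
  · intro he
    induction e using Sym2.ind with
    | _ a b =>
    have hab : T.Adj a b := by simpa using hF he
    by_cases ha : a = r
    · subst ha
      exact (root_edge_mem_gluedForest ⟨b, mem_nbrs_s12.mpr hab⟩).mpr (decide_eq_true he)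
    by_cases hb : b = r
    · subst hb
      rw [Sym2.eq_swap] at he ⊢
      exact (root_edge_mem_gluedForest ⟨a, mem_nbrs_s12.mpr hab.symm⟩).mpr (decide_eq_true he)
    obtain ⟨i, hai⟩ := exists_mem_branchFinset hT.connected ha
    have hbi := mem_branchFinset_of_adj hT i hab hb hai
    exact (map_val_mem_gluedForest (e := s(⟨a, hai⟩, ⟨b, hbi⟩)) hT).mpr
      (mem_splitForest_fst.mpr he)

lemma sum_branchChoices_gluedForest {M : Type*} [AddCommMonoid M] (hT : T.IsTree)
    (φ : Finset (Sym2 V) → M) :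
    ∑ q ∈ branchChoices T r, φ (gluedForest q) = ∑ F ∈ T.edgeFinset.powerset, φ F := by
  refine Finset.sum_nbij' gluedForest (splitForest T r) (fun q hq => ?_) (fun F hF => ?_)
    (fun q _ => splitForest_gluedForest hT) (fun F hF => gluedForest_splitForest hT
      (Finset.mem_powerset.mp hF)) fun _ _ => rfl
  · refine Finset.mem_powerset.mpr (gluedForest_subset fun i => ?_)
    exact Finset.mem_powerset.mp (Finset.mem_product.mp (Fintype.mem_piFinset.mp hq i)).1
  · refine Fintype.mem_piFinset.mpr fun i => Finset.mem_product.mpr ⟨?_, mem_univ _⟩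
    exact Finset.mem_powerset.mpr fun e he =>
      map_val_mem_edgeFinset.mp (Finset.mem_powerset.mp hF (mem_splitForest_fst.mp he))

end EdgeSplitting

section GeneratingFunctions

variable {W : Type u} [Fintype W] (x : ℝ)

-- The factor contributed by one branch, with forest `Fb.1` and root edge kept iff `Fb.2`, to the
-- term of `f` (`branchWeight`) or, when the marker of the root component lies in that branch, of
-- `rf` (`rootMarkWeight`) of a spanning forest of the whole tree.
noncomputable def branchWeight (ρ : W) (Fb : Finset (Sym2 W) × Bool) : ℝ :=
  if Fb.2 then numMarkingsAway Fb.1 ρ * x ^ (numComponents Fb.1 - 1)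
  else numMarkings Fb.1 * x ^ numComponents Fb.1

noncomputable def rootMarkWeight (Fb : Finset (Sym2 W) × Bool) : ℝ :=
  if Fb.2 then numMarkings Fb.1 * x ^ numComponents Fb.1 else 0

lemma sum_branchWeight (G : SimpleGraph W) (ρ : W) :
    ∑ Fb ∈ G.edgeFinset.powerset ×ˢ univ, branchWeight x ρ Fb = rfPoly G x + fPoly G ρ x := by
  rw [Finset.sum_product, rfPoly, fPoly, ← Finset.sum_add_distrib]
  refine Finset.sum_congr rfl fun F _ => ?_
  simp [branchWeight, add_comm]

lemma sum_rootMarkWeight (G : SimpleGraph W) :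
    ∑ Fb ∈ G.edgeFinset.powerset ×ˢ univ, rootMarkWeight x Fb = rfPoly G x := by
  rw [Finset.sum_product, rfPoly]
  refine Finset.sum_congr rfl fun F _ => ?_
  simp [rootMarkWeight]

lemma rfPoly_pos (G : SimpleGraph W) {x : ℝ} (hx : 0 < x) : 0 < rfPoly G x :=
  Finset.sum_pos (fun F _ => mul_pos (Nat.cast_pos.mpr (numMarkings_pos F)) (pow_pos hx _))
    ⟨∅, Finset.empty_mem_powerset _⟩

lemma fPoly_nonneg (G : SimpleGraph W) (ρ : W) {x : ℝ} (hx : 0 < x) : 0 ≤ fPoly G ρ x :=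
  Finset.sum_nonneg fun _ _ => mul_nonneg (Nat.cast_nonneg _) (pow_nonneg hx.le _)

end GeneratingFunctions

section Recursion

variable [Fintype V] {T : SimpleGraph V} {r : V} {x : ℝ}
  {q : (i : nbrs T r) → Finset (Sym2 (branchFinset T i r : Set V)) × Bool}

lemma fPoly_term_gluedForest (hT : T.IsTree) :
    (numMarkingsAway (gluedForest q) r : ℝ) * x ^ (numComponents (gluedForest q) - 1) =
      ∏ i : nbrs T r, branchWeight x (branchRoot T i r) (q i) := by
  rw [numMarkingsAway_gluedForest hT, numComponents_gluedForest hT, Nat.add_sub_cancel,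
    ← Finset.prod_pow_eq_pow_sum, Nat.cast_prod, ← Finset.prod_mul_distrib]
  refine Finset.prod_congr rfl fun i _ => ?_
  by_cases h : (q i).2 <;> simp [branchWeight, h]

lemma rootMarkWeight_eq (i : nbrs T r) :
    rootMarkWeight x (q i) = (if (q i).2 then
      (Nat.card ((forestGraph (q i).1).connectedComponentMk (branchRoot T i r)).supp : ℝ)
      else 0) * x * branchWeight x (branchRoot T i r) (q i) := by
  have : Nonempty (branchFinset T i r : Set V) := ⟨branchRoot T i r⟩
  by_cases h : (q i).2
  · simp only [rootMarkWeight, branchWeight, h, if_true,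
      numMarkings_eq_card_supp_mul _ (branchRoot T i r), Nat.cast_mul]
    rw [← Nat.sub_add_cancel (numComponents_pos (q i).1), pow_succ, Nat.add_sub_cancel]
    ring
  · simp [rootMarkWeight, h]

lemma rfPoly_term_gluedForest (hT : T.IsTree) :
    (numMarkings (gluedForest q) : ℝ) * x ^ numComponents (gluedForest q) =
      x * ∏ i : nbrs T r, branchWeight x (branchRoot T i r) (q i) +
        ∑ i : nbrs T r, rootMarkWeight x (q i) *
          ∏ j ∈ univ.erase i, branchWeight x (branchRoot T j r) (q j) := by
  have hpow : x ^ numComponents (gluedForest q) =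
      x * x ^ (numComponents (gluedForest q) - 1) := by
    rw [← pow_succ', numComponents_gluedForest hT, Nat.add_sub_cancel]
  have hterm : ∀ i, rootMarkWeight x (q i) *
      ∏ j ∈ univ.erase i, branchWeight x (branchRoot T j r) (q j) =
      (if (q i).2 then
        (Nat.card ((forestGraph (q i).1).connectedComponentMk (branchRoot T i r)).supp : ℝ)
        else 0) * x * ∏ j : nbrs T r, branchWeight x (branchRoot T j r) (q j) := fun i => by
    rw [rootMarkWeight_eq, mul_assoc, Finset.mul_prod_erase univ
      (fun j : nbrs T r => branchWeight x (branchRoot T j r) (q j)) (mem_univ i)]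
  rw [Finset.sum_congr rfl fun i _ => hterm i, ← Finset.sum_mul, ← Finset.sum_mul,
    ← fPoly_term_gluedForest hT, numMarkings_eq_card_supp_mul _ r, card_supp_gluedForest_root hT,
    hpow]
  push_cast
  ring

lemma fPoly_eq_prod (hT : T.IsTree) :
    fPoly T r x = ∏ u ∈ nbrs T r,
      (rfPoly (branchGraph T u r) x + fPoly (branchGraph T u r) (branchRoot T u r) x) := by
  calc fPoly T r x =
        ∑ q ∈ branchChoices T r, ∏ i : nbrs T r, branchWeight x (branchRoot T i r) (q i) := by
        rw [fPoly, ← sum_branchChoices_gluedForest hT]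
        exact Finset.sum_congr rfl fun q _ => fPoly_term_gluedForest hT
    _ = ∏ i : nbrs T r,
          (rfPoly (branchGraph T i r) x + fPoly (branchGraph T i r) (branchRoot T i r) x) := by
        rw [branchChoices, ← Finset.prod_univ_sum]
        exact Finset.prod_congr rfl fun i _ => sum_branchWeight x _ _
    _ = _ := by rw [Finset.prod_subtype (nbrs T r) (fun _ => Iff.rfl)]

lemma rfPoly_eq_add (hT : T.IsTree) :
    rfPoly T x =
      x * ∏ i : nbrs T r,
        (rfPoly (branchGraph T i r) x + fPoly (branchGraph T i r) (branchRoot T i r) x) +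
      ∑ i : nbrs T r, rfPoly (branchGraph T i r) x * ∏ j ∈ univ.erase i,
        (rfPoly (branchGraph T j r) x + fPoly (branchGraph T j r) (branchRoot T j r) x) := by
  rw [rfPoly, ← sum_branchChoices_gluedForest (r := r) hT
      fun F => (numMarkings F : ℝ) * x ^ numComponents F,
    Finset.sum_congr rfl fun q _ => rfPoly_term_gluedForest hT, Finset.sum_add_distrib,
    ← Finset.mul_sum, branchChoices, ← Finset.prod_univ_sum,
    Finset.sum_piFinset_sum_mul_prod_erase]
  simp only [sum_branchWeight, sum_rootMarkWeight]

lemma rfPoly_eq_mul (hT : T.IsTree) (hx : 0 < x) :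
    rfPoly T x =
      (∏ u ∈ nbrs T r,
        (rfPoly (branchGraph T u r) x + fPoly (branchGraph T u r) (branchRoot T u r) x)) *
      (x + ∑ u ∈ nbrs T r,
        rfPoly (branchGraph T u r) x /
          (rfPoly (branchGraph T u r) x + fPoly (branchGraph T u r) (branchRoot T u r) x)) := by
  rw [rfPoly_eq_add hT, Finset.prod_subtype (nbrs T r) (fun _ => Iff.rfl),
    Finset.sum_subtype (nbrs T r) (fun _ => Iff.rfl), mul_add, Finset.mul_sum, mul_comm]
  congr 1
  refine Finset.sum_congr rfl fun i _ => ?_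
  have hi : rfPoly (branchGraph T i r) x + fPoly (branchGraph T i r) (branchRoot T i r) x ≠ 0 :=
    (add_pos_of_pos_of_nonneg (rfPoly_pos _ hx) (fPoly_nonneg _ _ hx)).ne'
  rw [← Finset.mul_prod_erase univ _ (mem_univ i)]
  field_simp

lemma rho1_eq (hT : T.IsTree) (hx : 0 < x) :
    rho1 T r x =
      (x + ∑ u ∈ nbrs T r, rho1 (branchGraph T u r) (branchRoot T u r) x) /
        (1 + x + ∑ u ∈ nbrs T r, rho1 (branchGraph T u r) (branchRoot T u r) x) := by
  have hP : ∏ u ∈ nbrs T r,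
      (rfPoly (branchGraph T u r) x + fPoly (branchGraph T u r) (branchRoot T u r) x) ≠ 0 :=
    (Finset.prod_pos fun _ _ => add_pos_of_pos_of_nonneg (rfPoly_pos _ hx)
      (fPoly_nonneg _ _ hx)).ne'
  rw [rho1, rfPoly_eq_mul (r := r) hT hx, fPoly_eq_prod hT, ← mul_add_one,
    mul_div_mul_left _ _ hP, add_comm _ (1 : ℝ), ← add_assoc]
  rfl

end Recursion

theorem stmt12_general [Fintype V] (x : ℝ) (hx : 0 < x)
    (T : SimpleGraph V) (hT : T.IsTree) (r : V) :
    (fPoly T r x =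
      ∏ u ∈ nbrs T r,
        (rfPoly (branchGraph T u r) x + fPoly (branchGraph T u r) (branchRoot T u r) x)) ∧
    (rfPoly T x =
      (∏ u ∈ nbrs T r,
        (rfPoly (branchGraph T u r) x + fPoly (branchGraph T u r) (branchRoot T u r) x)) *
      (x + ∑ u ∈ nbrs T r,
        rfPoly (branchGraph T u r) x /
          (rfPoly (branchGraph T u r) x + fPoly (branchGraph T u r) (branchRoot T u r) x))) ∧
    (rho1 T r x =
      (x + ∑ u ∈ nbrs T r, rho1 (branchGraph T u r) (branchRoot T u r) x) /
        (1 + x + ∑ u ∈ nbrs T r, rho1 (branchGraph T u r) (branchRoot T u r) x)) :=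
  ⟨fPoly_eq_prod hT, rfPoly_eq_mul hT hx, rho1_eq hT hx⟩

/-- the recursions for `f`, `rf` and `ρ₁` of a rooted tree
`T = [T_1,…,T_k]` whose root has degree `k ≥ 1`. -/
theorem stmt12 [Fintype V] (x : ℝ) (hx : 0 < x)
    (T : SimpleGraph V) (hT : T.IsTree) (r : V) (hdeg : (nbrs T r).Nonempty) :
    (fPoly T r x =
      ∏ u ∈ nbrs T r,
        (rfPoly (branchGraph T u r) x + fPoly (branchGraph T u r) (branchRoot T u r) x)) ∧
    (rfPoly T x =
      (∏ u ∈ nbrs T r,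
        (rfPoly (branchGraph T u r) x + fPoly (branchGraph T u r) (branchRoot T u r) x)) *
      (x + ∑ u ∈ nbrs T r,
        rfPoly (branchGraph T u r) x /
          (rfPoly (branchGraph T u r) x + fPoly (branchGraph T u r) (branchRoot T u r) x))) ∧
    (rho1 T r x =
      (x + ∑ u ∈ nbrs T r, rho1 (branchGraph T u r) (branchRoot T u r) x) /
        (1 + x + ∑ u ∈ nbrs T r, rho1 (branchGraph T u r) (branchRoot T u r) x)) :=
  stmt12_general x hx T hT r
end
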